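/- arXiv:0705.2397 — 6 statements merged into one kernel-verified Lean document; each statement's English description precedes it below -/
import Mathlib

section
/- For all nonnegative integers q, a, s, the sum over b ≥ 0 of (-1)^b * C(q, b) * ∏_{r = a-s+1}^{a} (r + b) equals (-1)^q * s! * C(a, s - q). -/
private lemma prod_eq_descPoch (s : ℕ) (x : ℚ) :
    ∏ j ∈ Finset.range s, (x - s + 1 + j) = (descPochhammer ℚ s).eval x := by
  induction s with
  | zero => simp
  | succ n ih =>
    rw [descPochhammer_succ_eval, ← ih, Finset.prod_range_succ']
    have e1 : ∀ k ∈ Finset.range n,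
        (x - ((n+1:ℕ):ℚ) + 1 + ((k+1:ℕ):ℚ)) = (x - (n:ℚ) + 1 + k) := fun k _ => by
      push_cast; ring
    rw [Finset.prod_congr rfl e1]
    push_cast; ring

private lemma abel_step (q : ℕ) (g : ℕ → ℚ) :
    ∑ b ∈ Finset.range (q + 2), (-1 : ℚ) ^ b * (Nat.choose (q+1) b : ℚ) * g b
      = ∑ b ∈ Finset.range (q + 1),
          (-1 : ℚ) ^ b * (Nat.choose q b : ℚ) * (g b - g (b + 1)) := by
  have hsplit : ∀ b, ((Nat.choose (q+1) (b+1) : ℚ)) =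
      (Nat.choose q b : ℚ) + (Nat.choose q (b+1) : ℚ) := by
    intro b; rw [Nat.choose_succ_succ]; push_cast; ring
  rw [Finset.sum_range_succ' _ (q+1)]
  simp only [hsplit]
  have hT : ∑ i ∈ Finset.range (q+1),
      (-1 : ℚ) ^ (i+1) * (Nat.choose q (i+1) : ℚ) * g (i+1)
      = ∑ i ∈ Finset.range q, (-1 : ℚ) ^ (i+1) * (Nat.choose q (i+1) : ℚ) * g (i+1) := by
    rw [Finset.sum_range_succ, Nat.choose_succ_self]; simp
  have hS1 : ∑ b ∈ Finset.range (q+1), (-1 : ℚ) ^ b * (Nat.choose q b : ℚ) * g b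
      = (∑ i ∈ Finset.range q, (-1 : ℚ) ^ (i+1) * (Nat.choose q (i+1) : ℚ) * g (i+1))
        + g 0 := by
    rw [Finset.sum_range_succ' _ q]; simp
  have expand : ∑ i ∈ Finset.range (q+1),
        (-1:ℚ)^(i+1) * ((Nat.choose q i : ℚ) + (Nat.choose q (i+1) : ℚ)) * g (i+1)
      = - (∑ b ∈ Finset.range (q+1), (-1:ℚ)^b * (Nat.choose q b : ℚ) * g (b+1))
        + ∑ i ∈ Finset.range (q+1), (-1:ℚ)^(i+1) * (Nat.choose q (i+1) : ℚ) * g (i+1) := by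
    rw [← Finset.sum_neg_distrib, ← Finset.sum_add_distrib]
    apply Finset.sum_congr rfl; intro i _; ring
  rw [expand, hT]
  have hRHS : ∑ b ∈ Finset.range (q+1), (-1:ℚ)^b * (Nat.choose q b : ℚ) * (g b - g (b+1))
      = (∑ b ∈ Finset.range (q+1), (-1:ℚ)^b * (Nat.choose q b : ℚ) * g b)
        - ∑ b ∈ Finset.range (q+1), (-1:ℚ)^b * (Nat.choose q b : ℚ) * g (b+1) := by
    rw [← Finset.sum_sub_distrib]
    apply Finset.sum_congr rfl; intro b _; ring
  rw [hRHS, hS1]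
  simp [Nat.choose_zero_right]
  ring

/-- For all nonnegative integers `q, a, s`,
`∑_{b≥0} (-1)^b C(q,b) ∏_{r=a-s+1}^{a} (r+b) = (-1)^q s! C(a, s-q)`,
where the product is over `s` consecutive integers (empty for `s = 0`) and
`C(a, s-q)` is interpreted as `0` when `s < q`. -/
theorem stmt2 (q a s : ℕ) :
    ∑ b ∈ Finset.range (q + 1),
        (-1 : ℚ) ^ b * (Nat.choose q b : ℚ) *
          ∏ j ∈ Finset.range s, ((a : ℚ) - s + 1 + j + b)
      = (-1 : ℚ) ^ q * (Nat.factorial s : ℚ) *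
          (if q ≤ s then (Nat.choose a (s - q) : ℚ) else 0) := by
  induction q generalizing s with
  | zero =>
    rw [Finset.sum_range_one]
    simp only [pow_zero, Nat.choose_zero_right, Nat.cast_one, one_mul, Nat.cast_zero,
      Nat.zero_le, if_true, Nat.sub_zero]
    have e0 : ∀ j ∈ Finset.range s, ((a : ℚ) - s + 1 + j + (0:ℚ)) = ((a:ℚ) - s + 1 + j) :=
      fun j _ => by push_cast; ring
    rw [Finset.prod_congr rfl e0, prod_eq_descPoch, descPochhammer_eval_eq_descFactorial,
      Nat.descFactorial_eq_factorial_mul_choose]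
    push_cast; ring
  | succ n ih =>
    cases s with
    | zero =>
      simp only [Finset.range_zero, Finset.prod_empty, mul_one]
      rw [if_neg (by omega)]
      have h0 := Int.alternating_sum_range_choose_of_ne (Nat.succ_ne_zero n)
      have h2 : ∑ b ∈ Finset.range (n + 1 + 1), (-1 : ℚ) ^ b * (Nat.choose (n+1) b : ℚ) = 0 := by
        exact_mod_cast h0
      rw [h2]; ring
    | succ m =>
      have key := abel_step n
        (fun b => ∏ j ∈ Finset.range (m+1), ((a : ℚ) - (m+1:ℕ) + 1 + j + b))
      rw [show n + 1 + 1 = n + 2 from rfl, key]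
      have diff : ∀ b : ℕ,
          ((∏ j ∈ Finset.range (m+1), ((a : ℚ) - ((m+1:ℕ):ℚ) + 1 + j + b))
            - ∏ j ∈ Finset.range (m+1), ((a : ℚ) - ((m+1:ℕ):ℚ) + 1 + j + ((b+1:ℕ):ℚ)))
          = -((m:ℚ)+1) * ∏ j ∈ Finset.range m, ((a : ℚ) - (m:ℚ) + 1 + j + b) := by
        intro b
        rw [Finset.prod_range_succ', Finset.prod_range_succ]
        have e1 : ∀ k ∈ Finset.range m,
            ((a : ℚ) - ((m+1:ℕ):ℚ) + 1 + ((k+1:ℕ):ℚ) + b) = ((a : ℚ) - (m:ℚ) + 1 + k + b) :=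
          fun k _ => by push_cast; ring
        have e2 : ∀ k ∈ Finset.range m,
            ((a : ℚ) - ((m+1:ℕ):ℚ) + 1 + (k:ℚ) + ((b+1:ℕ):ℚ)) = ((a : ℚ) - (m:ℚ) + 1 + k + b) :=
          fun k _ => by push_cast; ring
        rw [Finset.prod_congr rfl e1, Finset.prod_congr rfl e2]
        push_cast; ring
      simp only [diff]
      have rw2 : ∑ b ∈ Finset.range (n + 1),
            (-1 : ℚ) ^ b * (Nat.choose n b : ℚ) *
              (-((m:ℚ)+1) * ∏ j ∈ Finset.range m, ((a : ℚ) - (m:ℚ) + 1 + j + b))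
          = -((m:ℚ)+1) * ∑ b ∈ Finset.range (n + 1),
            (-1 : ℚ) ^ b * (Nat.choose n b : ℚ) *
              ∏ j ∈ Finset.range m, ((a : ℚ) - (m:ℚ) + 1 + j + b) := by
        rw [Finset.mul_sum]; apply Finset.sum_congr rfl; intro b _; ring
      rw [rw2, ih m]
      by_cases h : n + 1 ≤ m + 1
      · rw [if_pos (by omega : n ≤ m), if_pos h,
          show m + 1 - (n + 1) = m - n from by omega, Nat.factorial_succ]
        push_cast; ring
      · rw [if_neg (by omega : ¬ n ≤ m), if_neg h]
        ring
end

section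
/- Let n ≥ 1 and let σ_1, ..., σ_n denote the elementary symmetric polynomials in variables α_1, ..., α_n over ℚ, and let I be the ideal of the ring of symmetric polynomials generated by σ_1, ..., σ_{n-1}. Then for every nonnegative integer m, the product σ_n^m · D^m, where D = ∏_{j≠k}(α_j - α_k) is the discriminant-type product over ordered pairs of distinct indices, does not lie in I. -/
open MvPolynomial

/-- For `n ≥ 1` and every `m ≥ 0`, the product `σ_n^m · D^m`, where
`D = ∏_{j ≠ k} (α_j - α_k)`, does not lie in the ideal of the ring of symmetric
polynomials `ℚ[α]^{S_n}` generated by `σ_1, …, σ_{n-1}`; i.e. it cannot be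
written as `∑_{p=1}^{n-1} c_p σ_p` with all `c_p` symmetric. -/
theorem stmt4 (n : ℕ) (hn : 1 ≤ n) (m : ℕ) :
    ¬ ∃ c : ℕ → MvPolynomial (Fin n) ℚ,
        (∀ p, (c p).IsSymmetric) ∧
        (esymm (Fin n) ℚ n) ^ m *
            (∏ p ∈ Finset.univ.offDiag, (X p.1 - X p.2)) ^ m
          = ∑ p ∈ Finset.Icc 1 (n - 1), c p * esymm (Fin n) ℚ p := by
  rintro ⟨c, hsym, heq⟩
  have hn0 : n ≠ 0 := by omega
  set ζ : ℂ := Complex.exp (2 * Real.pi * Complex.I / n) with hζdef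
  have hζ : IsPrimitiveRoot ζ n := Complex.isPrimitiveRoot_exp n hn0
  set v : Fin n → ℂ := fun i => ζ ^ (i : ℕ) with hv
  set s : Multiset ℂ := Finset.univ.val.map v with hs
  have hcard : Multiset.card s = n := by simp [hs]
  -- the roots of X^n - 1 are exactly s
  have hroots : (Polynomial.X ^ n - Polynomial.C (1 : ℂ)).roots = s := by
    rw [← Polynomial.nthRoots, hζ.nthRoots_eq (one_pow n), hs]
    have h1 : Multiset.map Fin.val (Finset.univ.val : Multiset (Fin n))
        = Multiset.range n := by
      have h2 := Fin.map_valEmbedding_univ (n := n)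
      rw [Nat.Iio_eq_range] at h2
      simpa [Finset.map] using congrArg Finset.val h2
    have : (Finset.univ.val : Multiset (Fin n)).map v
        = (Multiset.range n).map fun i => ζ ^ i := by
      rw [← h1, Multiset.map_map]
      rfl
    simp [this]
  have hprod : (s.map fun t => Polynomial.X - Polynomial.C t).prod
      = Polynomial.X ^ n - Polynomial.C (1 : ℂ) := by
    rw [← hroots]
    apply Polynomial.prod_multiset_X_sub_C_of_monic_of_roots_card_eq
      (Polynomial.monic_X_pow_sub_C (1 : ℂ) hn0)
    rw [hroots, hcard, Polynomial.natDegree_X_pow_sub_C]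
  have key : ∀ k, k ≤ n → (Polynomial.X ^ n - Polynomial.C (1 : ℂ)).coeff (n - k)
      = (-1) ^ k * s.esymm k := by
    intro k hk
    rw [← hprod, Multiset.prod_X_sub_C_coeff s (by omega), hcard, Nat.sub_sub_self hk]
  -- esymm vanishes for 1 ≤ p ≤ n - 1
  have h0 : ∀ p ∈ Finset.Icc 1 (n - 1), s.esymm p = 0 := by
    intro p hp
    rw [Finset.mem_Icc] at hp
    have hp1 : p ≤ n := by omega
    have := key p hp1
    rw [Polynomial.coeff_sub, Polynomial.coeff_X_pow, Polynomial.coeff_C] at this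
    rw [if_neg (by omega), if_neg (by omega), sub_zero] at this
    have h1 : ((-1 : ℂ)) ^ p ≠ 0 := by
      apply pow_ne_zero; norm_num
    field_simp at this
    exact (mul_eq_zero.mp this.symm).resolve_left h1
  -- esymm n is nonzero
  have hne : s.esymm n ≠ 0 := by
    have := key n le_rfl
    rw [Nat.sub_self, Polynomial.coeff_sub, Polynomial.coeff_X_pow, Polynomial.coeff_C] at this
    rw [if_neg (by omega), if_pos rfl, zero_sub] at this
    intro h
    rw [h, mul_zero] at this
    norm_num at this
  -- v is injective
  have hvinj : Function.Injective v := by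
    intro j k hjk
    exact Fin.ext (hζ.pow_inj j.isLt k.isLt hjk)
  -- evaluate the equation at v
  have := congrArg (aeval v : MvPolynomial (Fin n) ℚ →ₐ[ℚ] ℂ) heq
  simp only [map_mul, map_pow, map_sum, map_prod, map_sub, aeval_X,
    aeval_esymm_eq_multiset_esymm, ← hs] at this
  rw [Finset.sum_eq_zero (fun p hp => by rw [h0 p hp, mul_zero])] at this
  refine mul_ne_zero (pow_ne_zero _ hne) (pow_ne_zero _ ?_) this
  rw [Finset.prod_ne_zero_iff]
  rintro ⟨j, k⟩ hjk
  rw [Finset.mem_offDiag] at hjk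
  exact sub_ne_zero_of_ne fun h => hjk.2.2 (hvinj h)
end

section
/- For every positive integer r, the number σ_r of subgroups of ℤ² of index r equals the sum of the positive divisors of r. -/
open AddSubgroup

/-- The subgroup of `ℤ × ℤ` in Hermite normal form with parameters `a, d, b`. -/
def Hs (a d : ℕ) (b : ℤ) : AddSubgroup (ℤ × ℤ) where
  carrier := {p | (d : ℤ) ∣ p.2 ∧ ((a : ℤ) * d) ∣ (p.1 * d - b * p.2)}
  zero_mem' := by simp
  add_mem' := by
    rintro ⟨x, y⟩ ⟨x', y'⟩ ⟨h1, h2⟩ ⟨h1', h2'⟩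
    refine ⟨dvd_add h1 h1', ?_⟩
    have := dvd_add h2 h2'
    simp only [Prod.mk_add_mk]
    convert this using 1
    · rfl
    ring
  neg_mem' := by
    rintro ⟨x, y⟩ ⟨h1, h2⟩
    refine ⟨h1.neg_right, ?_⟩
    have := h2.neg_right
    simp only [Prod.neg_mk]
    convert this using 1
    · rfl
    ring

lemma mem_Hs {a d : ℕ} {b : ℤ} {p : ℤ × ℤ} :
    p ∈ Hs a d b ↔ (d : ℤ) ∣ p.2 ∧ ((a : ℤ) * d) ∣ (p.1 * d - b * p.2) := Iff.rfl

/-- The index of `Hs a d b` is `a * d` (when `d ≠ 0`). -/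
lemma Hs_index (a d : ℕ) (b : ℤ) (hd : 0 < d) : (Hs a d b).index = a * d := by
  have hdZ : (d : ℤ) ≠ 0 := by exact_mod_cast hd.ne'
  -- the kernel K of reduction of the second coordinate mod d
  set f : ℤ × ℤ →+ ZMod d := (Int.castAddHom (ZMod d)).comp (AddMonoidHom.snd ℤ ℤ) with hf
  have hKmem : ∀ p : ℤ × ℤ, p ∈ f.ker ↔ (d : ℤ) ∣ p.2 := by
    intro p
    simp [hf, AddMonoidHom.mem_ker, ZMod.intCast_zmod_eq_zero_iff_dvd]
  have hle : Hs a d b ≤ f.ker := fun p hp => (hKmem p).2 hp.1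
  have hK : f.ker.index = d := by
    rw [AddSubgroup.index_ker]
    have hs : Function.Surjective f := by
      intro z
      obtain ⟨y, hy⟩ := ZMod.intCast_surjective (n := d) z
      exact ⟨(0, y), hy⟩
    rw [AddMonoidHom.range_eq_top.mpr hs,
      Nat.card_congr AddSubgroup.topEquiv.toEquiv, Nat.card_zmod]
  -- the map φ : (x,t) ↦ (x, d t), with range K
  set φ : ℤ × ℤ →+ ℤ × ℤ :=
    { toFun := fun p => (p.1, (d : ℤ) * p.2)
      map_zero' := by simp
      map_add' := by intro p q; simp; ring } with hφ
  have hrange : φ.range = f.ker := by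
    ext p
    simp only [AddMonoidHom.mem_range, hKmem]
    constructor
    · rintro ⟨q, rfl⟩; exact ⟨q.2, rfl⟩
    · rintro ⟨t, ht⟩; exact ⟨(p.1, t), by simp [hφ, ← ht]⟩
  -- the pullback of Hs under φ is the kernel of (x,t) ↦ x - b t mod a
  set g : ℤ × ℤ →+ ℤ :=
    { toFun := fun p => p.1 - b * p.2
      map_zero' := by simp
      map_add' := by intro p q; simp; ring } with hg
  set ψ : ℤ × ℤ →+ ZMod a := (Int.castAddHom (ZMod a)).comp g with hψ
  have hcomap : (Hs a d b).comap φ = ψ.ker := by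
    ext ⟨x, t⟩
    simp only [AddSubgroup.mem_comap, mem_Hs, hφ, hψ, hg, AddMonoidHom.mem_ker,
      AddMonoidHom.coe_comp, AddMonoidHom.coe_mk, ZeroHom.coe_mk, Function.comp_apply,
      Int.coe_castAddHom, ZMod.intCast_zmod_eq_zero_iff_dvd]
    constructor
    · rintro ⟨-, h2⟩
      have : ((a : ℤ) * d) ∣ (x - b * t) * d := by convert h2 using 1; ring
      exact (mul_dvd_mul_iff_right hdZ).mp this
    · intro h
      refine ⟨⟨t, rfl⟩, ?_⟩
      have := mul_dvd_mul_right h (d : ℤ)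
      convert this using 1; rfl; ring
  have hrel : (Hs a d b).relIndex f.ker = a := by
    rw [← hrange, ← AddSubgroup.index_comap, hcomap, AddSubgroup.index_ker]
    have hs : Function.Surjective ψ := by
      intro z
      obtain ⟨x, hx⟩ := ZMod.intCast_surjective (n := a) z
      exact ⟨(x, 0), by simp [hψ, hg, hx]⟩
    rw [AddMonoidHom.range_eq_top.mpr hs,
      Nat.card_congr AddSubgroup.topEquiv.toEquiv, Nat.card_zmod]
  rw [← AddSubgroup.relIndex_mul_index hle, hK, hrel]

/-- Characterization of when a subgroup equals `Hs a d b`. -/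
lemma Hs_eq {H : AddSubgroup (ℤ × ℤ)} (a d : ℕ) (b : ℤ) (hd : 0 < d)
    (hmema : ((a : ℤ), (0 : ℤ)) ∈ H) (hmemb : ((b, (d : ℤ)) ∈ H))
    (hdvdd : ∀ p ∈ H, (d : ℤ) ∣ p.2)
    (hdvda : ∀ x : ℤ, ((x, (0 : ℤ)) ∈ H) → (a : ℤ) ∣ x) :
    H = Hs a d b := by
  have hdZ : (d : ℤ) ≠ 0 := by exact_mod_cast hd.ne'
  ext ⟨x, y⟩
  rw [mem_Hs]
  constructor
  · intro hp
    have h1 : (d : ℤ) ∣ y := hdvdd _ hp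
    obtain ⟨t, rfl⟩ := h1
    have hx0 : (x - t * b, (0 : ℤ)) ∈ H := by
      have := H.sub_mem hp (H.zsmul_mem hmemb t)
      simpa [smul_eq_mul, mul_comm] using this
    have := hdvda _ hx0
    refine ⟨⟨t, rfl⟩, ?_⟩
    have := mul_dvd_mul_right this (d : ℤ)
    convert this using 1
    · rfl
    ring
  · rintro ⟨h1, h2⟩
    obtain ⟨t, rfl⟩ := h1
    have h3 : ((a : ℤ) * d) ∣ (x - b * t) * d := by convert h2 using 1; ring
    obtain ⟨s, hs⟩ := (mul_dvd_mul_iff_right hdZ).mp h3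
    have : (x, (d : ℤ) * t) = s • ((a : ℤ), (0 : ℤ)) + t • (b, (d : ℤ)) := by
      simp only [Prod.smul_mk, smul_eq_mul, Prod.mk_add_mk, Prod.mk.injEq]
      constructor
      · linarith [hs]
      · ring
    rw [this]
    exact H.add_mem (H.zsmul_mem hmema s) (H.zsmul_mem hmemb t)

/-- For every positive integer `r`, the number of subgroups of `ℤ × ℤ` of
index `r` equals the sum of the positive divisors of `r`. -/
theorem stmt5 (r : ℕ) (hr : 1 ≤ r) :
    Nat.card {H : AddSubgroup (ℤ × ℤ) // H.index = r} = ∑ d ∈ Nat.divisors r, d := by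
  classical
  have hr0 : r ≠ 0 := by omega
  let F : (Σ p : r.divisorsAntidiagonal, Fin p.1.1) → {H : AddSubgroup (ℤ × ℤ) // H.index = r} :=
    fun x =>
    ⟨Hs x.1.1.1 x.1.1.2 ((x.2 : ℕ) : ℤ), by
      have hp := Nat.mem_divisorsAntidiagonal.mp x.1.2
      have hd : 0 < x.1.1.2 := Nat.pos_of_ne_zero (by
        intro h
        rw [h, mul_zero] at hp
        omega)
      rw [Hs_index _ _ _ hd, hp.1]⟩
  have hbij : Function.Bijective F := by
    constructor
    · rintro ⟨⟨⟨a, d⟩, hp⟩, b⟩ ⟨⟨⟨a', d'⟩, hp'⟩, b'⟩ h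
      simp only [F, Subtype.mk.injEq] at h
      have hp1 := Nat.mem_divisorsAntidiagonal.mp hp
      have hp1' := Nat.mem_divisorsAntidiagonal.mp hp'
      have hd : 0 < d := Nat.pos_of_ne_zero (by intro hh; rw [hh, mul_zero] at hp1; omega)
      have hd' : 0 < d' := Nat.pos_of_ne_zero (by intro hh; rw [hh, mul_zero] at hp1'; omega)
      have trivmem : ∀ (a d : ℕ) (b : ℤ), ((b : ℤ), (d : ℤ)) ∈ Hs a d b := by
        intro a d b
        exact mem_Hs.mpr ⟨dvd_refl _, by simp⟩
      have m1 : (((b' : ℕ) : ℤ), (d' : ℤ)) ∈ Hs a d ((b : ℕ) : ℤ) := h ▸ trivmem a' d' _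
      have m2 : (((b : ℕ) : ℤ), (d : ℤ)) ∈ Hs a' d' ((b' : ℕ) : ℤ) := h ▸ trivmem a d _
      have hdd' : d = d' := by
        have h1 : (d : ℤ) ∣ (d' : ℤ) := m1.1
        have h2 : (d' : ℤ) ∣ (d : ℤ) := m2.1
        exact Nat.dvd_antisymm (by exact_mod_cast h1) (by exact_mod_cast h2)
      subst hdd'
      have haa' : a = a' := Nat.eq_of_mul_eq_mul_right hd (by rw [hp1.1, hp1'.1])
      subst haa'
      have hbb' : (b : ℕ) = (b' : ℕ) := by
        have h2 := m1.2
        simp only at h2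
        have h3 : ((a : ℤ) * d) ∣ (((b' : ℕ) : ℤ) - ((b : ℕ) : ℤ)) * d := by
          convert h2 using 1; ring
        have hdZ : (d : ℤ) ≠ 0 := by exact_mod_cast hd.ne'
        have h4 : (a : ℤ) ∣ (((b' : ℕ) : ℤ) - ((b : ℕ) : ℤ)) :=
          (mul_dvd_mul_iff_right hdZ).mp h3
        have h5 : (((b' : ℕ) : ℤ) - ((b : ℕ) : ℤ)) = 0 := by
          apply Int.eq_zero_of_abs_lt_dvd h4
          have hb : (b : ℕ) < a := b.isLt
          have hb' : (b' : ℕ) < a := b'.isLt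
          rw [abs_lt]
          constructor <;> push_cast <;> omega
        omega
      have : b = b' := Fin.ext hbb'
      subst this
      rfl
    · rintro ⟨H, hH⟩
      -- the image of the second-coordinate projection is cyclic
      obtain ⟨g, hg⟩ := Int.subgroup_cyclic (H.map (AddMonoidHom.snd ℤ ℤ))
      set d := g.natAbs with hdd
      have hdvdd : ∀ p ∈ H, (d : ℤ) ∣ p.2 := by
        intro p hp
        have hmem : p.2 ∈ H.map (AddMonoidHom.snd ℤ ℤ) := ⟨p, hp, rfl⟩
        rw [hg, AddSubgroup.mem_closure_singleton] at hmem
        obtain ⟨n, hn⟩ := hmem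
        rw [← hn]
        exact Int.natAbs_dvd.mpr ⟨n, by rw [smul_eq_mul, mul_comm]⟩
      have hdmem : ∃ b0 : ℤ, (b0, (d : ℤ)) ∈ H := by
        have hgm : g ∈ H.map (AddMonoidHom.snd ℤ ℤ) := by
          rw [hg]
          exact AddSubgroup.mem_closure_singleton.mpr ⟨1, one_smul _ _⟩
        obtain ⟨⟨p1, p2⟩, hp, hp2⟩ := hgm
        have hp2' : p2 = g := hp2
        rcases Int.natAbs_eq g with hcase | hcase
        · exact ⟨p1, by rw [hdd, ← hcase, ← hp2']; exact hp⟩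
        · refine ⟨-p1, ?_⟩
          have hneg := H.neg_mem hp
          simp only [Prod.neg_mk] at hneg
          have hgd : -p2 = ((d : ℕ) : ℤ) := by rw [hp2', hcase, hdd]; ring
          rwa [hgd] at hneg
      have hd : 0 < d := by
        by_contra hcon
        have hd0 : d = 0 := by omega
        have hker : H ≤ (AddMonoidHom.snd ℤ ℤ).ker := by
          intro p hp
          have hdv := hdvdd p hp
          rw [hd0] at hdv
          have hp2 : p.2 = 0 := zero_dvd_iff.mp (by exact_mod_cast hdv)
          exact AddMonoidHom.mem_ker.mpr hp2
        have hki : ((AddMonoidHom.snd ℤ ℤ).ker).index = 0 := by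
          rw [AddSubgroup.index_ker,
            AddMonoidHom.range_eq_top.mpr (fun y => ⟨(0, y), rfl⟩),
            Nat.card_congr AddSubgroup.topEquiv.toEquiv]
          exact Nat.card_eq_zero_of_infinite
        have := AddSubgroup.index_dvd_of_le hker
        rw [hki, hH] at this
        omega
      -- the intersection with the x-axis is cyclic
      obtain ⟨g2, hg2⟩ := Int.subgroup_cyclic (H.comap (AddMonoidHom.inl ℤ ℤ))
      set a := g2.natAbs with haa
      have hdvda : ∀ x : ℤ, (x, (0 : ℤ)) ∈ H → (a : ℤ) ∣ x := by
        intro x hx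
        have hmem : x ∈ H.comap (AddMonoidHom.inl ℤ ℤ) := by
          simpa [AddSubgroup.mem_comap] using hx
        rw [hg2, AddSubgroup.mem_closure_singleton] at hmem
        obtain ⟨n, hn⟩ := hmem
        rw [← hn]
        exact Int.natAbs_dvd.mpr ⟨n, by rw [smul_eq_mul, mul_comm]⟩
      have hamem : ((a : ℤ), (0 : ℤ)) ∈ H := by
        have hgm : g2 ∈ H.comap (AddMonoidHom.inl ℤ ℤ) := by
          rw [hg2]
          exact AddSubgroup.mem_closure_singleton.mpr ⟨1, one_smul _ _⟩
        have hgH : (g2, (0 : ℤ)) ∈ H := by simpa [AddSubgroup.mem_comap] using hgm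
        rcases Int.natAbs_eq g2 with hcase | hcase
        · rwa [haa, ← hcase]
        · have := H.neg_mem hgH
          have heq : -(g2, (0 : ℤ)) = ((a : ℤ), (0 : ℤ)) := by
            rw [Prod.neg_mk]
            exact Prod.ext (by rw [hcase]; ring) (by ring)
          rwa [heq] at this
      obtain ⟨b0, hb0⟩ := hdmem
      have hHeq : H = Hs a d b0 := Hs_eq a d b0 hd hamem hb0 hdvdd hdvda
      have had : a * d = r := by
        rw [hHeq, Hs_index _ _ _ hd] at hH
        exact hH
      have ha : 0 < a := Nat.pos_of_ne_zero (by intro hh; rw [hh, zero_mul] at had; omega)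
      have haZ : (0 : ℤ) < (a : ℤ) := by exact_mod_cast ha
      set b : ℤ := b0 % (a : ℤ) with hbdef
      have hbnn : 0 ≤ b := Int.emod_nonneg b0 (by exact_mod_cast ha.ne')
      have hblt : b < (a : ℤ) := Int.emod_lt_of_pos b0 haZ
      have hbmem : (b, (d : ℤ)) ∈ H := by
        have hstep : (b, (d : ℤ)) = (b0, (d : ℤ)) - (b0 / (a : ℤ)) • ((a : ℤ), (0 : ℤ)) := by
          simp only [Prod.smul_mk, smul_eq_mul, Prod.mk_sub_mk, Prod.mk.injEq]
          constructor
          · rw [hbdef, Int.emod_def]; ring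
          · ring
        rw [hstep]
        exact H.sub_mem hb0 (H.zsmul_mem hamem _)
      have hHeq2 : H = Hs a d b := Hs_eq a d b hd hamem hbmem hdvdd hdvda
      have hfin : b.toNat < a := by omega
      refine ⟨⟨⟨(a, d), Nat.mem_divisorsAntidiagonal.mpr ⟨had, hr0⟩⟩, ⟨b.toNat, hfin⟩⟩, ?_⟩
      simp only [F]
      apply Subtype.ext
      simp only
      rw [show ((b.toNat : ℕ) : ℤ) = b from Int.toNat_of_nonneg hbnn]
      exact hHeq2.symm
  rw [← Nat.card_eq_of_bijective F hbij, Nat.card_eq_fintype_card, Fintype.card_sigma]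
  simp only [Fintype.card_fin]
  rw [Finset.sum_coe_sort (r.divisorsAntidiagonal) (fun p => p.1),
    Nat.sum_divisorsAntidiagonal (fun x _ => x)]
end

section
/- Fix n ≥ 2 and define power series I_{p,p}(t) ∈ ℚ[[e^t]] via the hypergeometric recursion: ∑_q I_{0,q}(t) w^q = e^{wt} ∑_{d≥0} e^{dt} ∏_{r=1}^{nd}(nw+r) / ∏_{r=1}^{d}((w+r)^n - w^n), and I_{p,q}(t) = d/dt (I_{p-1,q}(t)/I_{p-1,p-1}(t)) for q ≥ p ≥ 1. Then the product I_{0,0}(t) I_{1,1}(t) ⋯ I_{n-1,n-1}(t) (1 - n^n e^t) = 1. -/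
open PowerSeries

noncomputable section

/-- The hypergeometric term `∏_{r=1}^{nd}(nw+r) / ∏_{r=1}^{d}((w+r)^n - w^n)`,
as a formal power series in `w` over `ℚ` (the denominator has nonzero constant
term, so its power-series inverse is the honest inverse). -/
def hgTerm (n d : ℕ) : PowerSeries ℚ :=
  (∏ r ∈ Finset.Icc 1 (n * d), ((n : ℚ) • (X : PowerSeries ℚ) + C (r : ℚ))) *
    (∏ r ∈ Finset.Icc 1 d, (((X : PowerSeries ℚ) + C (r : ℚ)) ^ n - X ^ n))⁻¹

/-- The `t`-derivative on `ℚ[[e^t]]`, i.e. `e^{dt} ↦ d·e^{dt}` on the power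
series ring in the variable `x = e^t`. -/
def Dq (f : PowerSeries ℚ) : PowerSeries ℚ :=
  PowerSeries.mk fun d => (d : ℚ) * PowerSeries.coeff d f

/-- The `t`-derivative on polynomials in `t` with coefficients in `ℚ[[e^t]]`:
it acts as `d/dt` on the variable `t` and as `Dq` on the coefficients. -/
def ddt (p : Polynomial (PowerSeries ℚ)) : Polynomial (PowerSeries ℚ) :=
  Polynomial.derivative p + p.sum fun a b => Polynomial.C (Dq b) * Polynomial.X ^ a

/-- `I_{0,q}(t)`: the coefficient of `w^q` in
`e^{wt} ∑_{d≥0} e^{dt} ∏_{r=1}^{nd}(nw+r)/∏_{r=1}^{d}((w+r)^n - w^n)`,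
a polynomial in `t` with coefficients in `ℚ[[e^t]]`. -/
def I0 (n q : ℕ) : Polynomial (PowerSeries ℚ) :=
  ∑ a ∈ Finset.range (q + 1),
    Polynomial.C ((Nat.factorial a : ℚ)⁻¹ •
        PowerSeries.mk fun d => PowerSeries.coeff (q - a) (hgTerm n d)) *
      Polynomial.X ^ a

/-- `I_{p,q}(t)`, defined by `I_{p,q} = d/dt (I_{p-1,q} / I_{p-1,p-1})`; the
diagonal entry `I_{p-1,p-1}` is a power series in `e^t` (a constant polynomial
in `t`), and division by it is division by its constant (in `t`) coefficient. -/
def Ipq (n : ℕ) : ℕ → ℕ → Polynomial (PowerSeries ℚ)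
  | 0, q => I0 n q
  | p + 1, q => ddt (Ipq n p q * Polynomial.C (((Ipq n p p).coeff 0)⁻¹))

-- abbreviations
local notation "R" => PowerSeries ℚ
local notation "A" => Polynomial (PowerSeries ℚ)

/-! ### Section 1 : Dq and ddt basics -/

lemma Dq_coeff (f : R) (d : ℕ) : coeff d (Dq f) = (d : ℚ) * coeff d f := by
  simp [Dq]

lemma Dq_add (f g : R) : Dq (f + g) = Dq f + Dq g := by
  ext d; simp [Dq_coeff, mul_add]

lemma Dq_zero : Dq 0 = 0 := by ext d; simp [Dq_coeff]

lemma Dq_smul (c : ℚ) (f : R) : Dq (c • f) = c • Dq f := by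
  ext d; simp [Dq_coeff]; ring

lemma Dq_sum {ι : Type*} (s : Finset ι) (f : ι → R) :
    Dq (∑ i ∈ s, f i) = ∑ i ∈ s, Dq (f i) := by
  classical
  induction s using Finset.induction_on with
  | empty => simp [Dq_zero]
  | insert _ _ h ih => simp [Finset.sum_insert h, Dq_add, ih]

lemma Dq_mul (f g : R) : Dq (f * g) = Dq f * g + f * Dq g := by
  ext d
  rw [Dq_coeff, map_add, PowerSeries.coeff_mul, PowerSeries.coeff_mul, PowerSeries.coeff_mul,
    Finset.mul_sum, ← Finset.sum_add_distrib]
  refine Finset.sum_congr rfl fun p hp => ?_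
  replace hp : p.1 + p.2 = d := Finset.HasAntidiagonal.mem_antidiagonal.mp hp
  rw [Dq_coeff, Dq_coeff, ← hp]
  push_cast
  ring

lemma Dq_C (c : ℚ) : Dq (C c) = 0 := by
  ext d
  rw [Dq_coeff, PowerSeries.coeff_C]
  rcases eq_or_ne d 0 with h | h <;> simp [h]

lemma Dq_one : Dq 1 = 0 := by simpa using Dq_C 1

lemma Dq_X : Dq (X : R) = X := by
  ext d
  rw [Dq_coeff, PowerSeries.coeff_X]
  rcases eq_or_ne d 1 with h | h <;> simp [h, PowerSeries.coeff_X]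

lemma constantCoeff_Dq (f : R) : constantCoeff (Dq f) = 0 := by
  have := Dq_coeff f 0
  simpa [PowerSeries.coeff_zero_eq_constantCoeff] using this

/-- the coefficientwise `Dq` on polynomials -/
def Dcoef (p : A) : A := p.sum fun a b => Polynomial.C (Dq b) * Polynomial.X ^ a

lemma Dcoef_coeff (p : A) (k : ℕ) : (Dcoef p).coeff k = Dq (p.coeff k) := by
  classical
  rw [Dcoef, Polynomial.sum]
  rw [Polynomial.finset_sum_coeff]
  simp only [Polynomial.coeff_C_mul, Polynomial.coeff_X_pow]
  by_cases hk : k ∈ p.support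
  · rw [Finset.sum_eq_single k]
    · simp
    · intro b _ hbk; simp [Ne.symm hbk]
    · intro h; exact absurd hk h
  · have h0 : p.coeff k = 0 := Polynomial.notMem_support_iff.mp hk
    rw [h0, Dq_zero]
    apply Finset.sum_eq_zero
    intro b hb
    have : b ≠ k := fun h => hk (h ▸ hb)
    simp [Ne.symm this]

lemma ddt_coeff (p : A) (k : ℕ) :
    (ddt p).coeff k = p.coeff (k + 1) * ((k : R) + 1) + Dq (p.coeff k) := by
  rw [ddt, Polynomial.coeff_add, Polynomial.coeff_derivative]
  rw [show (p.sum fun a b => Polynomial.C (Dq b) * Polynomial.X ^ a) = Dcoef p from rfl,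
    Dcoef_coeff]

lemma ddt_add (p q : A) : ddt (p + q) = ddt p + ddt q := by
  ext k
  simp only [ddt_coeff, Polynomial.coeff_add, Dq_add]
  ring

lemma ddt_smul (c : ℚ) (p : A) : ddt (c • p) = c • ddt p := by
  ext k
  simp only [ddt_coeff, Polynomial.coeff_smul, Dq_smul, smul_add, smul_mul_assoc]

lemma ddt_mul (p q : A) : ddt (p * q) = ddt p * q + p * ddt q := by
  have hD : Dcoef (p * q) = Dcoef p * q + p * Dcoef q := by
    ext k
    simp only [Dcoef_coeff, Polynomial.coeff_add, Polynomial.coeff_mul]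
    rw [Dq_sum, ← Finset.sum_add_distrib]
    exact congrArg _ (Finset.sum_congr rfl fun ab _ => Dq_mul _ _)
  have : ddt (p * q) = (Polynomial.derivative (p * q) : A) + Dcoef (p * q) := rfl
  rw [this, Polynomial.derivative_mul, hD]
  have e1 : ddt p = Polynomial.derivative p + Dcoef p := rfl
  have e2 : ddt q = Polynomial.derivative q + Dcoef q := rfl
  rw [e1, e2]
  ring

lemma ddt_one : ddt (1 : A) = 0 := by
  ext k
  simp only [ddt_coeff, Polynomial.coeff_one]
  rcases eq_or_ne k 0 with h | h <;> simp [h, Dq_one, Dq_zero]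

lemma ddt_C (v : R) : ddt (Polynomial.C v) = Polynomial.C (Dq v) := by
  ext k
  rw [ddt_coeff]
  rcases eq_or_ne k 0 with h | h <;> simp [h, Polynomial.coeff_C, Dq_zero]

lemma ddt_zero : ddt (0 : A) = 0 := by
  have := ddt_smul 0 0; simpa using this

lemma ddt_sum {ι : Type*} (s : Finset ι) (f : ι → A) :
    ddt (∑ i ∈ s, f i) = ∑ i ∈ s, ddt (f i) := by
  classical
  induction s using Finset.induction_on with
  | empty => simp [ddt_zero]
  | insert _ _ h ih => simp [Finset.sum_insert h, ddt_add, ih]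


/-! ### Section 2 : Psi / Phi machinery -/

def Psi (q : ℕ) (γ : ℕ → R) : A :=
  ∑ a ∈ Finset.range (q + 1),
    Polynomial.C ((Nat.factorial a : ℚ)⁻¹ • γ (q - a)) * Polynomial.X ^ a

lemma Psi_coeff (q : ℕ) (γ : ℕ → R) (k : ℕ) :
    (Psi q γ).coeff k = if k ≤ q then (Nat.factorial k : ℚ)⁻¹ • γ (q - k) else 0 := by
  classical
  rw [Psi, Polynomial.finset_sum_coeff]
  simp only [Polynomial.coeff_C_mul, Polynomial.coeff_X_pow]
  by_cases hk : k ≤ q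
  · rw [if_pos hk, Finset.sum_eq_single k]
    · simp
    · intro b _ hbk; simp [Ne.symm hbk]
    · intro h; exact absurd (Finset.mem_range.mpr (Nat.lt_succ_of_le hk)) h
  · rw [if_neg hk]
    apply Finset.sum_eq_zero
    intro b hb
    have : b ≠ k := by
      intro h; exact hk (h ▸ Nat.lt_succ_iff.mp (Finset.mem_range.mp hb))
    simp [Ne.symm this]

lemma Psi_congr {q : ℕ} {γ δ : ℕ → R} (h : ∀ m, m ≤ q → γ m = δ m) :
    Psi q γ = Psi q δ := by
  ext k
  rw [Psi_coeff, Psi_coeff]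
  by_cases hk : k ≤ q
  · rw [if_pos hk, if_pos hk, h _ (Nat.sub_le _ _)]
  · rw [if_neg hk, if_neg hk]

lemma ddt_Psi (q : ℕ) (γ : ℕ → R) :
    ddt (Psi q γ) = Psi q fun m => (if 1 ≤ m then γ (m - 1) else 0) + Dq (γ m) := by
  ext k
  rw [ddt_coeff, Psi_coeff, Psi_coeff, Psi_coeff]
  rcases lt_trichotomy k q with h | h | h
  · rw [if_pos (Nat.succ_le_of_lt h), if_pos h.le, if_pos h.le,
      if_pos (by omega : 1 ≤ q - k)]
    have e1 : q - (k + 1) = q - k - 1 := by omega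
    rw [e1, smul_add, Dq_smul]
    congr 1
    rw [PowerSeries.smul_eq_C_mul, PowerSeries.smul_eq_C_mul,
      show ((k : R) + 1) = C ((k : ℚ) + 1) by rw [map_add, map_natCast, map_one]]
    rw [mul_right_comm, ← map_mul,
      show (Nat.factorial (k + 1) : ℚ)⁻¹ * ((k : ℚ) + 1) = (Nat.factorial k : ℚ)⁻¹ from by
        have h1 : ((k : ℚ) + 1) ≠ 0 := by positivity
        rw [Nat.factorial_succ]
        push_cast
        rw [mul_inv, mul_comm ((k : ℚ) + 1)⁻¹ _, mul_assoc, inv_mul_cancel₀ h1, mul_one]]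
    rw [PowerSeries.smul_eq_C_mul]
  · subst h
    rw [if_neg (by omega), if_pos le_rfl, if_pos le_rfl, Nat.sub_self,
      if_neg (by omega), zero_mul, zero_add, Dq_smul, smul_add, smul_zero, zero_add]
  · rw [if_neg (by omega), if_neg (by omega), if_neg (by omega), zero_mul, Dq_zero, add_zero]

lemma Psi_mul_C (q : ℕ) (γ : ℕ → R) (r : R) :
    Psi q γ * Polynomial.C r = Psi q fun m => γ m * r := by
  rw [Psi, Psi, Finset.sum_mul]
  refine Finset.sum_congr rfl fun a _ => ?_
  rw [mul_right_comm, ← Polynomial.C_mul, smul_mul_assoc]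

lemma C_mul_Psi (q : ℕ) (γ : ℕ → R) (r : R) :
    Polynomial.C r * Psi q γ = Psi q fun m => r * γ m := by
  rw [mul_comm, Psi_mul_C]
  exact Psi_congr fun m _ => mul_comm _ _

lemma Psi_add (q : ℕ) (γ δ : ℕ → R) :
    Psi q (fun m => γ m + δ m) = Psi q γ + Psi q δ := by
  ext k
  rw [Polynomial.coeff_add, Psi_coeff, Psi_coeff, Psi_coeff]
  by_cases hk : k ≤ q <;> simp [hk, smul_add]

lemma Psi_smul (q : ℕ) (γ : ℕ → R) (c : ℚ) :
    Psi q (fun m => c • γ m) = c • Psi q γ := by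
  ext k
  rw [Polynomial.coeff_smul, Psi_coeff, Psi_coeff]
  by_cases hk : k ≤ q <;> simp [hk, smul_comm c]

lemma Psi_zero (q : ℕ) : Psi q (fun _ => (0 : R)) = 0 := by
  ext k
  rw [Psi_coeff]
  by_cases hk : k ≤ q <;> simp [hk]

lemma Psi_eq_zero_of (q : ℕ) (γ : ℕ → R) (h : ∀ m, m ≤ q → γ m = 0) : Psi q γ = 0 := by
  rw [Psi_congr h, Psi_zero]

def Phi (q : ℕ) (c : ℕ → R) : A :=
  Psi q fun m => PowerSeries.mk fun d => coeff m (c d)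

lemma Phi_congr {q : ℕ} {c c' : ℕ → R} (h : ∀ d, c d = c' d) : Phi q c = Phi q c' := by
  unfold Phi; exact Psi_congr fun m _ => by simp only [h]

lemma ddt_Phi (q : ℕ) (c : ℕ → R) :
    ddt (Phi q c) = Phi q fun d => (X + C (d : ℚ)) * c d := by
  rw [Phi, ddt_Psi]
  refine Psi_congr fun m _ => ?_
  ext d
  simp only [PowerSeries.coeff_mk, map_add, add_mul, PowerSeries.coeff_C_mul, Dq_coeff]
  cases m with
  | zero =>
      rw [if_neg (by omega : ¬ 1 ≤ 0), PowerSeries.coeff_zero_X_mul, map_zero]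
  | succ m' =>
      rw [if_pos (by omega : 1 ≤ m' + 1), Nat.add_sub_cancel, PowerSeries.coeff_succ_X_mul,
        PowerSeries.coeff_mk]

lemma ddt_iter_Phi (q : ℕ) (c : ℕ → R) (k : ℕ) :
    ddt^[k] (Phi q c) = Phi q fun d => (X + C (d : ℚ)) ^ k * c d := by
  induction k with
  | zero => simp only [Function.iterate_zero, id_eq]; exact Phi_congr fun d => by rw [pow_zero, one_mul]
  | succ k ih =>
      rw [Function.iterate_succ_apply', ih, ddt_Phi]
      exact Phi_congr fun d => by rw [← mul_assoc, ← pow_succ']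

lemma Phi_add (q : ℕ) (c c' : ℕ → R) :
    Phi q (fun d => c d + c' d) = Phi q c + Phi q c' := by
  rw [Phi, Phi, Phi, ← Psi_add]
  exact Psi_congr fun m _ => by ext d; simp [PowerSeries.coeff_mk]

lemma Phi_sum {ι : Type*} (q : ℕ) (s : Finset ι) (f : ι → ℕ → R) :
    Phi q (fun d => ∑ i ∈ s, f i d) = ∑ i ∈ s, Phi q (f i) := by
  classical
  induction s using Finset.induction_on with
  | empty =>
      rw [Finset.sum_empty, Phi, Psi_eq_zero_of]
      intro m _; ext d; simp [PowerSeries.coeff_mk]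
  | insert _ _ h ih =>
      rw [Finset.sum_insert h, ← ih, ← Phi_add]
      exact Phi_congr fun d => by rw [Finset.sum_insert h]

lemma Phi_smul (q : ℕ) (c : ℕ → R) (a : ℚ) :
    Phi q (fun d => a • c d) = a • Phi q c := by
  rw [Phi, Phi, ← Psi_smul]
  exact Psi_congr fun m _ => by ext d; simp [PowerSeries.coeff_mk]

lemma Phi_Xpow_zero (q N : ℕ) (hqN : q < N) (c : ℕ → R) :
    Phi q (fun d => (X : R) ^ N * c d) = 0 := by
  refine Psi_eq_zero_of _ _ fun m hm => ?_
  ext d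
  rw [PowerSeries.coeff_mk, PowerSeries.coeff_X_pow_mul' (c d) N m,
    if_neg (by omega), map_zero]

lemma CX_mul_Phi (q : ℕ) (c : ℕ → R) :
    Polynomial.C (X : R) * Phi q c = Phi q fun d => if d = 0 then 0 else c (d - 1) := by
  rw [Phi, C_mul_Psi, Phi]
  refine Psi_congr fun m _ => ?_
  ext d
  cases d with
  | zero => simp [PowerSeries.coeff_zero_X_mul, PowerSeries.coeff_mk]
  | succ d' => simp [PowerSeries.coeff_succ_X_mul, PowerSeries.coeff_mk]

lemma Phi_X_mul (q : ℕ) (c : ℕ → R) :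
    Phi (q + 1) (fun d => (X : R) * c d) = Phi q c := by
  ext k
  rw [Phi, Phi, Psi_coeff, Psi_coeff]
  rcases lt_trichotomy k (q + 1) with h | h | h
  · rw [if_pos (by omega), if_pos (by omega)]
    congr 1
    ext d
    simp only [PowerSeries.coeff_mk, show q + 1 - k = (q - k) + 1 by omega,
      PowerSeries.coeff_succ_X_mul]
  · subst h
    rw [if_pos le_rfl, if_neg (by omega), Nat.sub_self]
    simp [PowerSeries.coeff_smul, PowerSeries.coeff_mk, PowerSeries.coeff_zero_X_mul]
  · rw [if_neg (by omega), if_neg (by omega)]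

/-! ### Section 3 : the gamma triangle -/

def gam (n : ℕ) : ℕ → ℕ → R
  | 0 => fun m => PowerSeries.mk fun d => coeff m (hgTerm n d)
  | p + 1 => fun m =>
      (if 1 ≤ m then gam n p (m - 1) else 0) * (gam n p p)⁻¹ +
        Dq (gam n p m * (gam n p p)⁻¹)

lemma hgTerm_zero (n : ℕ) : hgTerm n 0 = 1 := by
  rw [hgTerm]
  simp

lemma gam_spec (n : ℕ) : ∀ p,
    (∀ m, constantCoeff (gam n p m) = if m = p then 1 else 0) ∧
      (∀ m, m < p → gam n p m = 0) := by
  intro p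
  induction p with
  | zero =>
      constructor
      · intro m
        have : constantCoeff (gam n 0 m) = coeff m (hgTerm n 0) := by
          rw [show gam n 0 m = PowerSeries.mk fun d => coeff m (hgTerm n d) from rfl,
            ← PowerSeries.coeff_zero_eq_constantCoeff_apply, PowerSeries.coeff_mk]
        rw [this, hgTerm_zero, PowerSeries.coeff_one]
      · intro m hm; omega
  | succ p ih =>
      obtain ⟨ihc, ihz⟩ := ih
      have hcc : constantCoeff (gam n p p) = 1 := by rw [ihc p, if_pos rfl]
      have hccinv : constantCoeff ((gam n p p)⁻¹) = 1 := by
        rw [PowerSeries.constantCoeff_inv, hcc, inv_one]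
      have hunit : gam n p p * (gam n p p)⁻¹ = 1 :=
        PowerSeries.mul_inv_cancel _ (by rw [hcc]; norm_num)
      constructor
      · intro m
        rw [show gam n (p + 1) m =
            (if 1 ≤ m then gam n p (m - 1) else 0) * (gam n p p)⁻¹ +
              Dq (gam n p m * (gam n p p)⁻¹) from rfl]
        rw [map_add, map_mul, constantCoeff_Dq, add_zero, hccinv, mul_one]
        by_cases hm : 1 ≤ m
        · rw [if_pos hm, ihc]
          by_cases h1 : m - 1 = p
          · rw [if_pos h1, if_pos (by omega)]
          · rw [if_neg h1, if_neg (by omega)]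
        · rw [if_neg hm, map_zero, if_neg (by omega)]
      · intro m hm
        rw [show gam n (p + 1) m =
            (if 1 ≤ m then gam n p (m - 1) else 0) * (gam n p p)⁻¹ +
              Dq (gam n p m * (gam n p p)⁻¹) from rfl]
        rcases eq_or_lt_of_le (Nat.lt_succ_iff.mp hm) with h | h
        · subst h
          have h1 : (if 1 ≤ m then gam n m (m - 1) else 0) = 0 := by
            by_cases hm1 : 1 ≤ m
            · rw [if_pos hm1, ihz _ (by omega)]
            · rw [if_neg hm1]
          rw [h1, zero_mul, zero_add, hunit, Dq_one]
        · rw [ihz m h, zero_mul, Dq_zero, add_zero]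
          by_cases hm1 : 1 ≤ m
          · rw [if_pos hm1, ihz _ (by omega), zero_mul]
          · rw [if_neg hm1, zero_mul]

lemma gam_constantCoeff (n p : ℕ) :
    constantCoeff (gam n p p) = 1 := by rw [(gam_spec n p).1 p, if_pos rfl]

lemma gam_eq_zero (n p m : ℕ) (h : m < p) : gam n p m = 0 := (gam_spec n p).2 m h

lemma Ipq_eq_Psi (n : ℕ) : ∀ p q, Ipq n p q = Psi q (gam n p) := by
  intro p
  induction p with
  | zero => intro q; rfl
  | succ p ih =>
      intro q
      rw [show Ipq n (p + 1) q = ddt (Ipq n p q * Polynomial.C (((Ipq n p p).coeff 0)⁻¹))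
          from rfl, ih q, ih p]
      have hc0 : (Psi p (gam n p)).coeff 0 = gam n p p := by
        rw [Psi_coeff, if_pos (Nat.zero_le _), Nat.sub_zero, Nat.factorial_zero]
        norm_num
      rw [hc0, Psi_mul_C, ddt_Psi]
      refine Psi_congr fun m _ => ?_
      rw [show gam n (p + 1) m =
          (if 1 ≤ m then gam n p (m - 1) else 0) * (gam n p p)⁻¹ +
            Dq (gam n p m * (gam n p p)⁻¹) from rfl, ite_mul, zero_mul]

lemma Ipq_diag (n p : ℕ) : Ipq n p p = Polynomial.C (gam n p p) := by
  rw [Ipq_eq_Psi]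
  ext k
  rw [Psi_coeff, Polynomial.coeff_C]
  rcases eq_or_ne k 0 with h | h
  · subst h
    rw [if_pos (Nat.zero_le _), if_pos rfl, Nat.sub_zero, Nat.factorial_zero]
    norm_num
  · rw [if_neg h]
    by_cases hk : k ≤ p
    · rw [if_pos hk, gam_eq_zero n p _ (by omega), smul_zero]
    · rw [if_neg hk]

lemma Ipq_coeff_zero (n p : ℕ) : (Ipq n p p).coeff 0 = gam n p p := by
  rw [Ipq_diag, Polynomial.coeff_C, if_pos rfl]

/-! ### Section 4a : hypergeometric identities -/

def hgDen (n d : ℕ) : R :=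
  ∏ r ∈ Finset.Icc 1 d, (((X : R) + C (r : ℚ)) ^ n - X ^ n)

def hgTermB (n d : ℕ) : R :=
  (∏ r ∈ Finset.Icc 1 (n * d), ((n : ℚ) • (X : R) + C ((r : ℚ) - 1))) * (hgDen n d)⁻¹

lemma hgTerm_def' (n d : ℕ) : hgTerm n d =
    (∏ r ∈ Finset.Icc 1 (n * d), ((n : ℚ) • (X : R) + C (r : ℚ))) * (hgDen n d)⁻¹ := rfl

lemma qfac_constantCoeff (n r : ℕ) (hn : 1 ≤ n) (hr : 1 ≤ r) :
    constantCoeff (((X : R) + C (r : ℚ)) ^ n - X ^ n) = (r : ℚ) ^ n := by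
  rw [map_sub, map_pow, map_pow, map_add, PowerSeries.constantCoeff_X,
    PowerSeries.constantCoeff_C, zero_add, zero_pow (by omega : n ≠ 0), sub_zero]

lemma qfac_ne_zero (n r : ℕ) (hn : 1 ≤ n) (hr : 1 ≤ r) :
    constantCoeff (((X : R) + C (r : ℚ)) ^ n - X ^ n) ≠ 0 := by
  rw [qfac_constantCoeff n r hn hr]
  have : (r : ℚ) ≠ 0 := Nat.cast_ne_zero.mpr (by omega)
  positivity

lemma hgDen_constantCoeff_ne_zero (n d : ℕ) (hn : 1 ≤ n) :
    constantCoeff (hgDen n d) ≠ 0 := by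
  rw [hgDen, map_prod]
  rw [Finset.prod_ne_zero_iff]
  intro r hr
  exact qfac_ne_zero n r hn (Finset.mem_Icc.mp hr).1

lemma ps_inv_mul (φ ψ : R) (hφ : constantCoeff φ ≠ 0) (hψ : constantCoeff ψ ≠ 0) :
    (φ * ψ)⁻¹ = φ⁻¹ * ψ⁻¹ := by
  have h : constantCoeff (φ * ψ) ≠ 0 := by
    rw [map_mul]; exact mul_ne_zero hφ hψ
  calc (φ * ψ)⁻¹ = (φ⁻¹ * φ) * (ψ⁻¹ * ψ) * (φ * ψ)⁻¹ := by
        rw [PowerSeries.inv_mul_cancel _ hφ, PowerSeries.inv_mul_cancel _ hψ, one_mul, one_mul]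
    _ = (φ⁻¹ * ψ⁻¹) * ((φ * ψ) * (φ * ψ)⁻¹) := by ring
    _ = φ⁻¹ * ψ⁻¹ := by rw [PowerSeries.mul_inv_cancel _ h, mul_one]

lemma Icc_one_eq_Ioc_zero (m : ℕ) : Finset.Icc 1 m = Finset.Ioc 0 m := by
  ext r; simp only [Finset.mem_Icc, Finset.mem_Ioc]; omega

lemma numA_succ (n e : ℕ) :
    (∏ r ∈ Finset.Icc 1 (n * (e + 1)), ((n : ℚ) • (X : R) + C (r : ℚ))) =
      (∏ r ∈ Finset.Icc 1 (n * e), ((n : ℚ) • (X : R) + C (r : ℚ))) *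
        ∏ r ∈ Finset.Icc 1 n, ((n : ℚ) • (X : R) + C ((n * e + r : ℕ) : ℚ)) := by
  rw [Icc_one_eq_Ioc_zero, Icc_one_eq_Ioc_zero, Icc_one_eq_Ioc_zero,
    show n * (e + 1) = n * e + n by ring,
    ← Finset.prod_Ioc_consecutive _ (Nat.zero_le (n * e)) (Nat.le_add_right (n * e) n)]
  congr 1
  rw [show Finset.Ioc (n * e) (n * e + n) = Finset.map
      (addLeftEmbedding (n * e)) (Finset.Ioc 0 n) by rw [Finset.map_add_left_Ioc]; ring_nf,
    Finset.prod_map]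
  rfl

lemma hgTerm_rec (n e : ℕ) (hn : 1 ≤ n) :
    (((X : R) + C ((e + 1 : ℕ) : ℚ)) ^ n - X ^ n) * hgTerm n (e + 1) =
      (∏ r ∈ Finset.Icc 1 n, ((n : ℚ) • (X : R) + C ((n * e + r : ℕ) : ℚ))) *
        hgTerm n e := by
  have hden : hgDen n (e + 1) = hgDen n e * (((X : R) + C ((e + 1 : ℕ) : ℚ)) ^ n - X ^ n) := by
    rw [hgDen, hgDen, Finset.prod_Icc_succ_top (by omega : 1 ≤ e + 1)]
  have hq := qfac_ne_zero n (e + 1) hn (by omega)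
  have hde := hgDen_constantCoeff_ne_zero n e hn
  rw [hgTerm_def', hgTerm_def', hden, ps_inv_mul _ _ hde hq, numA_succ n e]
  set Q : R := ((X : R) + C ((e + 1 : ℕ) : ℚ)) ^ n - X ^ n with hQ
  set P : R := ∏ r ∈ Finset.Icc 1 (n * e), ((n : ℚ) • (X : R) + C (r : ℚ))
  set S : R := ∏ r ∈ Finset.Icc 1 n, ((n : ℚ) • (X : R) + C ((n * e + r : ℕ) : ℚ))
  calc Q * (P * S * ((hgDen n e)⁻¹ * Q⁻¹))
      = S * (P * (hgDen n e)⁻¹) * (Q * Q⁻¹) := by ring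
    _ = S * (P * (hgDen n e)⁻¹) := by
        rw [PowerSeries.mul_inv_cancel _ (qfac_ne_zero n (e + 1) hn (by omega)), mul_one]

lemma Icc_zero_top (m : ℕ) : Finset.Icc 0 m = insert 0 (Finset.Icc 1 m) := by
  ext r
  simp only [Finset.mem_Icc, Finset.mem_insert]
  omega

lemma numB_eq (n d : ℕ) (hnd : 1 ≤ n * d) :
    (∏ r ∈ Finset.Icc 1 (n * d), ((n : ℚ) • (X : R) + C ((r : ℚ) - 1))) =
      ((n : ℚ) • (X : R)) *
        ∏ r ∈ Finset.Icc 1 (n * d - 1), ((n : ℚ) • (X : R) + C (r : ℚ)) := by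
  have h1 : Finset.Icc 1 (n * d) = Finset.map (addLeftEmbedding 1) (Finset.Icc 0 (n * d - 1)) := by
    rw [Finset.map_add_left_Icc]
    congr 1
    omega
  rw [h1, Finset.prod_map]
  have h2 : ∀ s : ℕ, ((n : ℚ) • (X : R) + C (((addLeftEmbedding 1 : ℕ ↪ ℕ) s : ℚ) - 1)) =
      ((n : ℚ) • (X : R) + C (s : ℚ)) := by
    intro s
    have : ((addLeftEmbedding 1 : ℕ ↪ ℕ) s) = 1 + s := rfl
    rw [this]
    push_cast
    ring_nf
  calc ∏ s ∈ Finset.Icc 0 (n * d - 1),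
        ((n : ℚ) • (X : R) + C (((addLeftEmbedding 1 : ℕ ↪ ℕ) s : ℚ) - 1))
      = ∏ s ∈ Finset.Icc 0 (n * d - 1), ((n : ℚ) • (X : R) + C (s : ℚ)) :=
        Finset.prod_congr rfl fun s _ => h2 s
    _ = ((n : ℚ) • (X : R)) * ∏ r ∈ Finset.Icc 1 (n * d - 1),
          ((n : ℚ) • (X : R) + C (r : ℚ)) := by
        rw [Icc_zero_top, Finset.prod_insert (by simp)]
        norm_num

lemma keyB (n d : ℕ) (hn : 1 ≤ n) :
    ((X : R) + C (d : ℚ)) * hgTermB n d = X * hgTerm n d := by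
  rcases Nat.eq_zero_or_pos d with hd | hd
  · subst hd
    rw [hgTermB, hgTerm_def']
    norm_num
  · have hnd : 1 ≤ n * d := Nat.one_le_iff_ne_zero.mpr (by positivity)
    rw [hgTermB, hgTerm_def', ← mul_assoc, ← mul_assoc, numB_eq n d hnd]
    congr 1
    have hsplit : (∏ r ∈ Finset.Icc 1 (n * d), ((n : ℚ) • (X : R) + C (r : ℚ))) =
        (∏ r ∈ Finset.Icc 1 (n * d - 1), ((n : ℚ) • (X : R) + C (r : ℚ))) *
          ((n : ℚ) • (X : R) + C ((n * d : ℕ) : ℚ)) := by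
      conv_lhs => rw [show n * d = (n * d - 1) + 1 by omega]
      rw [Finset.prod_Icc_succ_top (by omega : 1 ≤ n * d - 1 + 1),
        show n * d - 1 + 1 = n * d by omega]
    rw [hsplit]
    set P : R := ∏ r ∈ Finset.Icc 1 (n * d - 1), ((n : ℚ) • (X : R) + C (r : ℚ))
    rw [PowerSeries.smul_eq_C_mul]
    have hc : (C (d : ℚ)) * C (n : ℚ) = C ((n * d : ℕ) : ℚ) := by
      rw [← map_mul]
      congr 1
      push_cast
      ring
    calc ((X : R) + C (d : ℚ)) * (C (n : ℚ) * X * P)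
        = (C (n : ℚ) * X * X + C (d : ℚ) * C (n : ℚ) * X) * P := by ring
      _ = X * (P * (C (n : ℚ) * X + C ((n * d : ℕ) : ℚ))) := by rw [hc]; ring

/-! ### Section 4b : the hypergeometric ODEs -/

lemma prod_split_gen (f : ℕ → R) (n e : ℕ) :
    (∏ r ∈ Finset.Icc 1 (n * (e + 1)), f r) =
      (∏ r ∈ Finset.Icc 1 (n * e), f r) * ∏ r ∈ Finset.Icc 1 n, f (n * e + r) := by
  rw [Icc_one_eq_Ioc_zero, Icc_one_eq_Ioc_zero, Icc_one_eq_Ioc_zero,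
    show n * (e + 1) = n * e + n by ring,
    ← Finset.prod_Ioc_consecutive _ (Nat.zero_le (n * e)) (Nat.le_add_right (n * e) n)]
  congr 1
  rw [show Finset.Ioc (n * e) (n * e + n) = Finset.map
      (addLeftEmbedding (n * e)) (Finset.Ioc 0 n) by rw [Finset.map_add_left_Ioc]; ring_nf,
    Finset.prod_map]
  rfl

lemma hgTermB_def' (n d : ℕ) : hgTermB n d =
    (∏ r ∈ Finset.Icc 1 (n * d), ((n : ℚ) • (X : R) + C ((r : ℚ) - 1))) *
      (hgDen n d)⁻¹ := rfl

lemma hgTermB_rec (n e : ℕ) (hn : 1 ≤ n) :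
    (((X : R) + C ((e + 1 : ℕ) : ℚ)) ^ n - X ^ n) * hgTermB n (e + 1) =
      (∏ r ∈ Finset.Icc 1 n, ((n : ℚ) • (X : R) + C (((n * e + r : ℕ) : ℚ) - 1))) *
        hgTermB n e := by
  have hden : hgDen n (e + 1) = hgDen n e * (((X : R) + C ((e + 1 : ℕ) : ℚ)) ^ n - X ^ n) := by
    rw [hgDen, hgDen, Finset.prod_Icc_succ_top (by omega : 1 ≤ e + 1)]
  have hq := qfac_ne_zero n (e + 1) hn (by omega)
  have hde := hgDen_constantCoeff_ne_zero n e hn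
  rw [hgTermB_def', hgTermB_def', hden, ps_inv_mul _ _ hde hq,
    prod_split_gen (fun r => ((n : ℚ) • (X : R) + C ((r : ℚ) - 1))) n e]
  set Q : R := ((X : R) + C ((e + 1 : ℕ) : ℚ)) ^ n - X ^ n with hQ
  set P : R := ∏ r ∈ Finset.Icc 1 (n * e), ((n : ℚ) • (X : R) + C ((r : ℚ) - 1))
  set S : R := ∏ r ∈ Finset.Icc 1 n, ((n : ℚ) • (X : R) + C (((n * e + r : ℕ) : ℚ) - 1))
  calc Q * (P * S * ((hgDen n e)⁻¹ * Q⁻¹))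
      = S * (P * (hgDen n e)⁻¹) * (Q * Q⁻¹) := by ring
    _ = S * (P * (hgDen n e)⁻¹) := by
        rw [PowerSeries.mul_inv_cancel _ hq, mul_one]

def Ppoly (n : ℕ) (c : ℕ → ℚ) : Polynomial ℚ :=
  ∏ r ∈ Finset.Icc 1 n, ((n : ℚ) • Polynomial.X + Polynomial.C (c r))

lemma aeval_Ppoly (n : ℕ) (c : ℕ → ℚ) (x : R) :
    Polynomial.aeval x (Ppoly n c) = ∏ r ∈ Finset.Icc 1 n, ((n : ℚ) • x + C (c r)) := by
  rw [Ppoly, map_prod]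
  refine Finset.prod_congr rfl fun r _ => ?_
  rw [map_add, map_smul, Polynomial.aeval_X, Polynomial.aeval_C]
  congr 1

lemma Ppoly_natDegree_le (n : ℕ) (c : ℕ → ℚ) : (Ppoly n c).natDegree ≤ n := by
  refine le_trans (Polynomial.natDegree_prod_le _ _) ?_
  have : ∀ r ∈ Finset.Icc 1 n,
      ((n : ℚ) • Polynomial.X + Polynomial.C (c r)).natDegree ≤ 1 := by
    intro r _
    refine le_trans (Polynomial.natDegree_add_le _ _) ?_
    simp only [max_le_iff]
    constructor
    · exact le_trans (Polynomial.natDegree_smul_le _ _) Polynomial.natDegree_X_le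
    · simp
  refine le_trans (Finset.sum_le_sum this) ?_
  rw [Finset.sum_const, Nat.card_Icc, smul_eq_mul, mul_one]
  omega

lemma ODE_gen (n : ℕ) (hn : 1 ≤ n) (P : Polynomial ℚ) (hdeg : P.natDegree ≤ n) (h : ℕ → R)
    (hslot : ∀ d : ℕ, ((X : R) + C (d : ℚ)) ^ n * h d = X ^ n * h d +
      (if d = 0 then 0 else
        Polynomial.aeval ((X : R) + C ((d - 1 : ℕ) : ℚ)) P * h (d - 1)))
    (q : ℕ) (hq : q < n) :
    ddt^[n] (Phi q h) = Polynomial.C (X : R) *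
      ∑ k ∈ Finset.range (n + 1), P.coeff k • ddt^[k] (Phi q h) := by
  have hsum : ∑ k ∈ Finset.range (n + 1), P.coeff k • ddt^[k] (Phi q h) =
      Phi q fun d => Polynomial.aeval ((X : R) + C (d : ℚ)) P * h d := by
    calc ∑ k ∈ Finset.range (n + 1), P.coeff k • ddt^[k] (Phi q h)
        = ∑ k ∈ Finset.range (n + 1), Phi q fun d =>
            P.coeff k • (((X : R) + C (d : ℚ)) ^ k * h d) := by
          refine Finset.sum_congr rfl fun k _ => ?_
          rw [ddt_iter_Phi, Phi_smul]
      _ = Phi q fun d => ∑ k ∈ Finset.range (n + 1),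
            P.coeff k • (((X : R) + C (d : ℚ)) ^ k * h d) := by
          rw [Phi_sum]
      _ = Phi q fun d => Polynomial.aeval ((X : R) + C (d : ℚ)) P * h d := by
          refine Phi_congr fun d => ?_
          rw [Polynomial.aeval_eq_sum_range' (Nat.lt_succ_of_le hdeg), Finset.sum_mul]
          exact Finset.sum_congr rfl fun k _ => (smul_mul_assoc _ _ _).symm
  rw [hsum, CX_mul_Phi, ddt_iter_Phi]
  have : (Phi q fun d => ((X : R) + C (d : ℚ)) ^ n * h d) =
      Phi q (fun d => (X : R) ^ n * h d) + Phi q (fun d => if d = 0 then 0 else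
        Polynomial.aeval ((X : R) + C ((d - 1 : ℕ) : ℚ)) P * h (d - 1)) := by
    rw [← Phi_add]
    exact Phi_congr fun d => hslot d
  rw [this, Phi_Xpow_zero q n hq, zero_add]

lemma hslot_of_rec (n : ℕ) (hn : 1 ≤ n) (h : ℕ → R) (c : ℕ → ℚ)
    (hrec : ∀ e : ℕ, (((X : R) + C ((e + 1 : ℕ) : ℚ)) ^ n - X ^ n) * h (e + 1) =
      (∏ r ∈ Finset.Icc 1 n, ((n : ℚ) • (X : R) + C ((n * e : ℕ) + c r))) * h e) :
    ∀ d : ℕ, ((X : R) + C (d : ℚ)) ^ n * h d = X ^ n * h d +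
      (if d = 0 then 0 else
        Polynomial.aeval ((X : R) + C ((d - 1 : ℕ) : ℚ)) (Ppoly n c) * h (d - 1)) := by
  intro d
  cases d with
  | zero =>
      rw [if_pos rfl, add_zero]
      norm_num
  | succ e =>
      rw [if_neg (by omega), Nat.add_sub_cancel]
      have ha : Polynomial.aeval ((X : R) + C ((e : ℕ) : ℚ)) (Ppoly n c) =
          ∏ r ∈ Finset.Icc 1 n, ((n : ℚ) • (X : R) + C ((n * e : ℕ) + c r)) := by
        rw [aeval_Ppoly]
        refine Finset.prod_congr rfl fun r _ => ?_
        rw [smul_add, add_assoc]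
        congr 1
        rw [PowerSeries.smul_eq_C_mul, ← map_mul, ← map_add]
        congr 1
        push_cast
        ring
      rw [ha, ← hrec e]
      push_cast
      ring

/-! ### Section 4c : the two ODE systems -/

lemma I0_eq_Phi (n q : ℕ) : I0 n q = Phi q (hgTerm n) := rfl

lemma ODE_y (n q : ℕ) (hn : 1 ≤ n) (hq : q < n) :
    ddt^[n] (I0 n q) = Polynomial.C (X : R) *
      ∑ k ∈ Finset.range (n + 1),
        (Ppoly n fun r => (r : ℚ)).coeff k • ddt^[k] (I0 n q) := by
  rw [I0_eq_Phi]
  refine ODE_gen n hn _ (Ppoly_natDegree_le _ _) _ ?_ q hq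
  refine hslot_of_rec n hn _ _ ?_
  intro e
  rw [hgTerm_rec n e hn]
  congr 1
  refine Finset.prod_congr rfl fun r _ => ?_
  congr 1
  push_cast
  ring

lemma ODE_z (n q : ℕ) (hn : 1 ≤ n) (hq : q < n) :
    ddt^[n] (Phi q (hgTermB n)) = Polynomial.C (X : R) *
      ∑ k ∈ Finset.range (n + 1),
        (Ppoly n fun r => (r : ℚ) - 1).coeff k • ddt^[k] (Phi q (hgTermB n)) := by
  refine ODE_gen n hn _ (Ppoly_natDegree_le _ _) _ ?_ q hq
  refine hslot_of_rec n hn _ _ ?_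
  intro e
  rw [hgTermB_rec n e hn]
  congr 1
  refine Finset.prod_congr rfl fun r _ => ?_
  congr 1
  push_cast
  ring

lemma hgDen_zero (n : ℕ) : hgDen n 0 = 1 := by
  rw [hgDen, Finset.Icc_eq_empty (by omega : ¬ (1 : ℕ) ≤ 0), Finset.prod_empty]

lemma hgTermB_zero (n : ℕ) : hgTermB n 0 = 1 := by
  rw [hgTermB, hgDen_zero, Nat.mul_zero,
    Finset.Icc_eq_empty (by omega : ¬ (1 : ℕ) ≤ 0), Finset.prod_empty, one_mul]
  have h : (1 : R) * (1 : R)⁻¹ = 1 := PowerSeries.mul_inv_cancel _ (by rw [map_one]; norm_num)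
  rw [one_mul] at h
  exact h

lemma hgTermB_constantCoeff (n d : ℕ) (hn : 1 ≤ n) (hd : 1 ≤ d) :
    constantCoeff (hgTermB n d) = 0 := by
  rw [hgTermB_def', map_mul, map_prod]
  have h1 : (1 : ℕ) ∈ Finset.Icc 1 (n * d) := by
    rw [Finset.mem_Icc]
    constructor
    · omega
    · exact Nat.one_le_iff_ne_zero.mpr (by positivity)
  have hz : constantCoeff ((n : ℚ) • (X : R) + C (((1 : ℕ) : ℚ) - 1)) = 0 := by
    rw [map_add, PowerSeries.smul_eq_C_mul, map_mul, PowerSeries.constantCoeff_X,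
      PowerSeries.constantCoeff_C]
    norm_num
  rw [Finset.prod_eq_zero h1 hz, zero_mul]

lemma z_zero (n : ℕ) (hn : 1 ≤ n) : Phi 0 (hgTermB n) = 1 := by
  refine Polynomial.ext fun k => ?_
  rw [Phi, Psi_coeff, Polynomial.coeff_one]
  rcases eq_or_ne k 0 with hk | hk
  · subst hk
    rw [if_pos (le_refl 0), if_pos rfl, Nat.factorial_zero, Nat.cast_one, inv_one, one_smul]
    refine PowerSeries.ext fun d => ?_
    rw [PowerSeries.coeff_mk, PowerSeries.coeff_one]
    rcases Nat.eq_zero_or_pos d with hd | hd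
    · subst hd
      rw [if_pos rfl, Nat.sub_zero, hgTermB_zero,
        PowerSeries.coeff_zero_eq_constantCoeff_apply, map_one]
    · rw [if_neg (by omega), Nat.sub_zero, PowerSeries.coeff_zero_eq_constantCoeff_apply,
        hgTermB_constantCoeff n d hn hd]
  · rw [if_neg (by omega), if_neg hk]

lemma ddt_z (n q : ℕ) (hn : 1 ≤ n) : ddt (Phi (q + 1) (hgTermB n)) = I0 n q := by
  rw [ddt_Phi, I0_eq_Phi,
    show Phi q (hgTerm n) = Phi (q + 1) fun d => (X : R) * hgTerm n d from
      (Phi_X_mul q (hgTerm n)).symm]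
  exact Phi_congr fun d => keyB n d hn


/-! ### Section 5 : determinant machinery -/

lemma ddt_zsmul (m : ℤ) (p : A) : ddt (m • p) = m • ddt p :=
  map_zsmul (AddMonoidHom.mk' ddt ddt_add) m p

lemma ddt_usmul (u : ℤˣ) (p : A) : ddt (u • p) = u • ddt p := by
  rw [Units.smul_def, Units.smul_def, ddt_zsmul]

lemma ddt_prod {ι : Type*} [DecidableEq ι] (s : Finset ι) (f : ι → A) :
    ddt (∏ i ∈ s, f i) = ∑ i ∈ s, ddt (f i) * ∏ j ∈ s.erase i, f j := by
  induction s using Finset.induction_on with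
  | empty => simp [ddt_one]
  | @insert a s ha ih =>
      rw [Finset.prod_insert ha, ddt_mul, ih, Finset.sum_insert ha, Finset.erase_insert ha,
        Finset.mul_sum]
      congr 1
      refine Finset.sum_congr rfl fun i hi => ?_
      have hai : a ≠ i := fun h => ha (h ▸ hi)
      rw [Finset.erase_insert_of_ne hai,
        Finset.prod_insert (fun hmem => ha (Finset.mem_of_mem_erase hmem))]
      ring

lemma ddt_iter_zero (i : ℕ) : ddt^[i] (0 : A) = 0 := by
  induction i with
  | zero => rfl
  | succ i ih => rw [Function.iterate_succ_apply, ddt_zero, ih]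

lemma ddt_iter_one (i : ℕ) : ddt^[i] (1 : A) = if i = 0 then 1 else 0 := by
  cases i with
  | zero => rfl
  | succ i => rw [Function.iterate_succ_apply, ddt_one, ddt_iter_zero, if_neg (by omega)]

lemma ddt_det {k : ℕ} (M : Matrix (Fin k) (Fin k) A) :
    ddt M.det = ∑ r : Fin k, (M.updateRow r fun j => ddt (M r j)).det := by
  classical
  calc ddt M.det
      = ∑ σ : Equiv.Perm (Fin k), Equiv.Perm.sign σ •
          ∑ i : Fin k, ddt (M (σ i) i) * ∏ j ∈ Finset.univ.erase i, M (σ j) j := by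
        rw [Matrix.det_apply, ddt_sum]
        exact Finset.sum_congr rfl fun σ _ => by rw [ddt_usmul, ddt_prod]
    _ = ∑ σ : Equiv.Perm (Fin k), ∑ r : Fin k, Equiv.Perm.sign σ •
          (ddt (M r ((σ⁻¹ : Equiv.Perm (Fin k)) r)) *
            ∏ j ∈ Finset.univ.erase ((σ⁻¹ : Equiv.Perm (Fin k)) r), M (σ j) j) := by
        refine Finset.sum_congr rfl fun σ _ => ?_
        rw [Finset.smul_sum,
          ← Equiv.sum_comp σ (fun r => Equiv.Perm.sign σ •
            (ddt (M r ((σ⁻¹ : Equiv.Perm (Fin k)) r)) *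
              ∏ j ∈ Finset.univ.erase ((σ⁻¹ : Equiv.Perm (Fin k)) r), M (σ j) j))]
        refine Finset.sum_congr rfl fun i _ => ?_
        simp only [Equiv.Perm.inv_def, Equiv.symm_apply_apply]
    _ = ∑ r : Fin k, (M.updateRow r fun j => ddt (M r j)).det := by
        rw [Finset.sum_comm]
        refine Finset.sum_congr rfl fun r _ => ?_
        rw [Matrix.det_apply]
        refine Finset.sum_congr rfl fun σ _ => ?_
        congr 1
        rw [← Finset.mul_prod_erase Finset.univ _
          (Finset.mem_univ ((σ⁻¹ : Equiv.Perm (Fin k)) r))]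
        congr 1
        · rw [show σ ((σ⁻¹ : Equiv.Perm (Fin k)) r) = r from σ.apply_symm_apply r,
            Matrix.updateRow_self]
        · refine Finset.prod_congr rfl fun j hj => ?_
          have hj' : σ j ≠ r := by
            intro h
            refine (Finset.mem_erase.mp hj).1 ?_
            rw [← h]; exact (σ.symm_apply_apply j).symm
          rw [Matrix.updateRow_ne hj']

lemma det_updateRow_finsum {k : ℕ} {ι : Type*} (M : Matrix (Fin k) (Fin k) A) (r : Fin k)
    (s : Finset ι) (c : ι → A) (v : ι → Fin k → A) :
    (M.updateRow r fun j => ∑ i ∈ s, c i * v i j).det =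
      ∑ i ∈ s, c i * (M.updateRow r (v i)).det := by
  classical
  induction s using Finset.induction_on with
  | empty =>
      rw [Finset.sum_empty]
      have h0 : (fun j => ∑ i ∈ (∅ : Finset ι), c i * v i j) = (0 : A) • (M r) := by
        funext j; simp
      rw [h0, Matrix.det_updateRow_smul, zero_mul]
  | @insert a s ha ih =>
      have hrow : (fun j => ∑ i ∈ insert a s, c i * v i j) =
          (c a • v a) + fun j => ∑ i ∈ s, c i * v i j := by
        funext j
        simp [Finset.sum_insert ha]
      rw [hrow, Matrix.det_updateRow_add, ih, Matrix.det_updateRow_smul, Finset.sum_insert ha]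

/-- the coefficients in the iterated Leibniz rule -/
def lcoef (f : A) : ℕ → ℕ → A
  | 0, l => if l = 0 then f else 0
  | i + 1, l => ddt (lcoef f i l) + (if 1 ≤ l then lcoef f i (l - 1) else 0)

lemma lcoef_eq_zero (f : A) : ∀ i l, i < l → lcoef f i l = 0 := by
  intro i
  induction i with
  | zero => intro l hl; rw [show lcoef f 0 l = if l = 0 then f else 0 from rfl, if_neg (by omega)]
  | succ i ih =>
      intro l hl
      rw [show lcoef f (i + 1) l = ddt (lcoef f i l) + (if 1 ≤ l then lcoef f i (l - 1) else 0)
          from rfl, ih l (by omega), ddt_zero, zero_add]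
      rw [if_pos (by omega), ih (l - 1) (by omega)]

lemma lcoef_diag (f : A) : ∀ i, lcoef f i i = f := by
  intro i
  induction i with
  | zero => rfl
  | succ i ih =>
      rw [show lcoef f (i + 1) (i + 1) = ddt (lcoef f i (i + 1)) +
          (if 1 ≤ i + 1 then lcoef f i (i + 1 - 1) else 0) from rfl,
        lcoef_eq_zero f i (i + 1) (by omega), ddt_zero, zero_add, if_pos (by omega),
        Nat.add_sub_cancel, ih]

lemma ddt_iter_mul (f g : A) : ∀ i : ℕ,
    ddt^[i] (f * g) = ∑ l ∈ Finset.range (i + 1), lcoef f i l * ddt^[l] g := by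
  intro i
  induction i with
  | zero => simp [lcoef]
  | succ i ih =>
      rw [Function.iterate_succ_apply', ih, ddt_sum]
      have hterm : ∀ l, ddt (lcoef f i l * ddt^[l] g) =
          ddt (lcoef f i l) * ddt^[l] g + lcoef f i l * ddt^[l + 1] g := by
        intro l
        rw [ddt_mul, Function.iterate_succ_apply']
      calc ∑ l ∈ Finset.range (i + 1), ddt (lcoef f i l * ddt^[l] g)
          = ∑ l ∈ Finset.range (i + 1), ddt (lcoef f i l) * ddt^[l] g +
              ∑ l ∈ Finset.range (i + 1), lcoef f i l * ddt^[l + 1] g := by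
            rw [← Finset.sum_add_distrib]
            exact Finset.sum_congr rfl fun l _ => hterm l
        _ = ∑ l ∈ Finset.range (i + 2), ddt (lcoef f i l) * ddt^[l] g +
              ∑ l ∈ Finset.range (i + 2), (if 1 ≤ l then lcoef f i (l - 1) else 0) *
                ddt^[l] g := by
            congr 1
            · rw [Finset.sum_range_succ (fun l => ddt (lcoef f i l) * ddt^[l] g) (i + 1),
                lcoef_eq_zero f i (i + 1) (by omega), ddt_zero, zero_mul, add_zero]
            · rw [Finset.sum_range_succ' (fun l => (if 1 ≤ l then lcoef f i (l - 1) else 0) *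
                ddt^[l] g) (i + 1)]
              simp only [if_neg (by omega : ¬ 1 ≤ 0), zero_mul, add_zero]
              refine Finset.sum_congr rfl fun l _ => ?_
              rw [if_pos (by omega), Nat.add_sub_cancel]
        _ = ∑ l ∈ Finset.range (i + 2), lcoef f (i + 1) l * ddt^[l] g := by
            rw [← Finset.sum_add_distrib]
            refine Finset.sum_congr rfl fun l _ => ?_
            rw [show lcoef f (i + 1) l = ddt (lcoef f i l) +
              (if 1 ≤ l then lcoef f i (l - 1) else 0) from rfl, add_mul]

lemma wron_red {k : ℕ} (f : A) (g : Fin k → A) :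
    (Matrix.det (Matrix.of fun i j : Fin k => ddt^[(i : ℕ)] (f * g j))) =
      f ^ k * Matrix.det (Matrix.of fun i j : Fin k => ddt^[(i : ℕ)] (g j)) := by
  classical
  set L : Matrix (Fin k) (Fin k) A := Matrix.of fun i l : Fin k => lcoef f (i : ℕ) (l : ℕ)
    with hLdef
  set N : Matrix (Fin k) (Fin k) A := Matrix.of fun l j : Fin k => ddt^[(l : ℕ)] (g j)
    with hNdef
  have hM : (Matrix.of fun i j : Fin k => ddt^[(i : ℕ)] (f * g j)) = L * N := by
    refine Matrix.ext fun i j => ?_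
    rw [Matrix.mul_apply]
    have hentry : ∀ l : Fin k, L i l * N l j = lcoef f (i : ℕ) (l : ℕ) * ddt^[(l : ℕ)] (g j) :=
      fun l => rfl
    rw [Finset.sum_congr rfl fun l _ => hentry l, Matrix.of_apply]
    rw [ddt_iter_mul, Fin.sum_univ_eq_sum_range fun l => lcoef f i l * ddt^[l] (g j)]
    refine Finset.sum_subset ?_ ?_
    · intro l hl
      rw [Finset.mem_range] at hl ⊢
      have := i.isLt
      omega
    · intro l _ hl
      rw [Finset.mem_range] at hl
      rw [lcoef_eq_zero f i l (by omega), zero_mul]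
  rw [hM, Matrix.det_mul]
  congr 1
  have htri : L.BlockTriangular OrderDual.toDual := by
    intro i j hij
    exact lcoef_eq_zero f i j (by exact hij)
  rw [Matrix.det_of_lowerTriangular L htri]
  calc ∏ i : Fin k, L i i = ∏ i : Fin k, f := Finset.prod_congr rfl fun i _ => lcoef_diag f i
    _ = f ^ k := by rw [Finset.prod_const, Finset.card_univ, Fintype.card_fin]

lemma wron_expand {k : ℕ} (g : Fin (k + 1) → A) (hg0 : g 0 = 1) :
    (Matrix.det (Matrix.of fun i j : Fin (k + 1) => ddt^[(i : ℕ)] (g j))) =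
      Matrix.det (Matrix.of fun i j : Fin k => ddt^[(i : ℕ)] (ddt (g j.succ))) := by
  rw [Matrix.det_succ_column_zero]
  rw [Finset.sum_eq_single 0]
  · simp only [Fin.val_zero, pow_zero, one_smul, Matrix.of_apply, Function.iterate_zero,
      id_eq, hg0, one_mul]
    have hsub : (Matrix.submatrix (Matrix.of fun i j : Fin (k + 1) => ddt^[(i : ℕ)] (g j))
        (Fin.succAbove 0) Fin.succ) =
        Matrix.of fun i j : Fin k => ddt^[(i : ℕ)] (ddt (g j.succ)) := by
      refine Matrix.ext fun i j => ?_
      rw [Matrix.submatrix_apply, Fin.succAbove_zero, Matrix.of_apply, Matrix.of_apply,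
        Fin.val_succ, Function.iterate_succ_apply]
    rw [hsub]
  · intro i _ hi
    have hi' : (i : ℕ) ≠ 0 := fun h => hi (Fin.ext h)
    have hz : (Matrix.of fun i j : Fin (k + 1) => ddt^[(i : ℕ)] (g j)) i 0 = 0 := by
      rw [Matrix.of_apply, hg0, ddt_iter_one, if_neg hi']
    rw [hz, mul_zero, zero_mul]
  · intro h
    exact absurd (Finset.mem_univ 0) h

/-! ### Section 6 : Wronskian product formula and Wronskian ODE -/

lemma wron_Ipq (n : ℕ) : ∀ k p,
    (Matrix.det (Matrix.of fun i j : Fin k => ddt^[(i : ℕ)] (Ipq n p (p + (j : ℕ))))) =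
      ∏ j ∈ Finset.range k, (Polynomial.C (gam n (p + j) (p + j))) ^ (k - j) := by
  intro k
  induction k with
  | zero => intro p; rw [Matrix.det_fin_zero, Finset.range_zero, Finset.prod_empty]
  | succ k ih =>
      intro p
      have hginv : gam n p p * (gam n p p)⁻¹ = 1 :=
        PowerSeries.mul_inv_cancel _ (by rw [gam_constantCoeff]; norm_num)
      set h : Fin (k + 1) → A :=
        fun j => Ipq n p (p + (j : ℕ)) * Polynomial.C ((gam n p p)⁻¹) with hdef
      have hfh : ∀ j : Fin (k + 1),
          Polynomial.C (gam n p p) * h j = Ipq n p (p + (j : ℕ)) := by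
        intro j
        calc Polynomial.C (gam n p p) * (Ipq n p (p + (j : ℕ)) * Polynomial.C ((gam n p p)⁻¹))
            = Ipq n p (p + (j : ℕ)) * (Polynomial.C (gam n p p) *
                Polynomial.C ((gam n p p)⁻¹)) := by ring
          _ = Ipq n p (p + (j : ℕ)) := by
              rw [← Polynomial.C_mul, hginv, Polynomial.C_1, mul_one]
      have hstep1 : (Matrix.of fun i j : Fin (k + 1) => ddt^[(i : ℕ)] (Ipq n p (p + (j : ℕ)))) =
          Matrix.of fun i j : Fin (k + 1) => ddt^[(i : ℕ)] (Polynomial.C (gam n p p) * h j) := by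
        refine Matrix.ext fun i j => ?_
        rw [Matrix.of_apply, Matrix.of_apply, hfh j]
      have hh0 : h 0 = 1 := by
        show Ipq n p (p + ((0 : Fin (k + 1)) : ℕ)) * Polynomial.C ((gam n p p)⁻¹) = 1
        rw [show p + ((0 : Fin (k + 1)) : ℕ) = p by simp, Ipq_diag, ← Polynomial.C_mul, hginv,
          Polynomial.C_1]
      have hhsucc : ∀ j : Fin k, ddt (h j.succ) = Ipq n (p + 1) ((p + 1) + (j : ℕ)) := by
        intro j
        rw [hdef]
        have hc : Polynomial.C ((gam n p p)⁻¹) =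
            Polynomial.C (((Ipq n p p).coeff 0)⁻¹) := by rw [Ipq_coeff_zero]
        rw [hc]
        rw [show ddt (Ipq n p (p + (j.succ : ℕ)) * Polynomial.C (((Ipq n p p).coeff 0)⁻¹)) =
          Ipq n (p + 1) (p + (j.succ : ℕ)) from rfl]
        congr 1
        rw [Fin.val_succ]
        omega
      rw [hstep1, wron_red]
      have hexp : (Matrix.det (Matrix.of fun i j : Fin (k + 1) => ddt^[(i : ℕ)] (h j))) =
          Matrix.det (Matrix.of fun i j : Fin k => ddt^[(i : ℕ)] (ddt (h j.succ))) :=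
        wron_expand h hh0
      have hmat2 : (Matrix.of fun i j : Fin k => ddt^[(i : ℕ)] (ddt (h j.succ))) =
          Matrix.of fun i j : Fin k => ddt^[(i : ℕ)] (Ipq n (p + 1) ((p + 1) + (j : ℕ))) := by
        refine Matrix.ext fun i j => ?_
        rw [Matrix.of_apply, Matrix.of_apply, hhsucc j]
      rw [hexp, hmat2, ih (p + 1), mul_comm,
        Finset.prod_range_succ' (fun j => (Polynomial.C (gam n (p + j) (p + j))) ^ (k + 1 - j)) k,
        Nat.add_zero, Nat.sub_zero]
      congr 1
      refine Finset.prod_congr rfl fun j _ => ?_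
      have e1 : p + 1 + j = p + (j + 1) := by omega
      have e2 : k - j = k + 1 - (j + 1) := by omega
      rw [e1, e2]

lemma wron_ode (m : ℕ) (P : Polynomial ℚ) (u : ℕ → A)
    (hode : ∀ q, q < m + 1 → ddt^[m + 1] (u q) =
      Polynomial.C (X : R) * ∑ k ∈ Finset.range (m + 2), P.coeff k • ddt^[k] (u q)) :
    ddt (Matrix.det (Matrix.of fun i j : Fin (m + 1) => ddt^[(i : ℕ)] (u (j : ℕ)))) =
      P.coeff (m + 1) • (Polynomial.C (X : R) *
        ddt (Matrix.det (Matrix.of fun i j : Fin (m + 1) => ddt^[(i : ℕ)] (u (j : ℕ))))) +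
      P.coeff m • (Polynomial.C (X : R) *
        Matrix.det (Matrix.of fun i j : Fin (m + 1) => ddt^[(i : ℕ)] (u (j : ℕ)))) := by
  classical
  set M : Matrix (Fin (m + 1)) (Fin (m + 1)) A :=
    Matrix.of fun i j : Fin (m + 1) => ddt^[(i : ℕ)] (u (j : ℕ)) with hMdef
  have hM_apply : ∀ i j : Fin (m + 1), M i j = ddt^[(i : ℕ)] (u (j : ℕ)) := fun i j => rfl
  have hrow : ∀ r : Fin (m + 1), (r : ℕ) < m →
      (M.updateRow r fun j => ddt (M r j)).det = 0 := by
    intro r hr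
    have hne : (⟨(r : ℕ) + 1, by omega⟩ : Fin (m + 1)) ≠ r := by
      intro hc
      have := congrArg (fun x : Fin (m + 1) => (x : ℕ)) hc
      simp at this
    refine Matrix.det_zero_of_row_eq (i := r) (j := ⟨(r : ℕ) + 1, by omega⟩) (Ne.symm hne) ?_
    funext j
    rw [Matrix.updateRow_self, Matrix.updateRow_ne hne]
    show ddt (M r j) = M ⟨(r : ℕ) + 1, by omega⟩ j
    rw [hM_apply, hM_apply]
    show ddt (ddt^[(r : ℕ)] (u (j : ℕ))) = ddt^[(r : ℕ) + 1] (u (j : ℕ))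
    rw [← Function.iterate_succ_apply' ddt]
  have hstep1 : ddt M.det =
      (M.updateRow (Fin.last m) fun j => ddt^[m + 1] (u (j : ℕ))).det := by
    rw [ddt_det]
    have hrw : (fun j : Fin (m + 1) => ddt (M (Fin.last m) j)) =
        fun j : Fin (m + 1) => ddt^[m + 1] (u (j : ℕ)) := by
      funext j
      rw [hM_apply, Fin.val_last, ← Function.iterate_succ_apply' ddt]
    rw [Finset.sum_eq_single (Fin.last m)]
    · rw [hrw]
    · intro r _ hr
      refine hrow r ?_
      have h1 : (r : ℕ) ≠ m := fun h => hr (Fin.ext (by rw [h, Fin.val_last]))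
      have h2 := r.isLt
      omega
    · intro h
      exact absurd (Finset.mem_univ _) h
  have hode' : (fun j : Fin (m + 1) => ddt^[m + 1] (u (j : ℕ))) =
      fun j : Fin (m + 1) => ∑ k ∈ Finset.range (m + 2),
        (P.coeff k • Polynomial.C (X : R)) * ddt^[k] (u (j : ℕ)) := by
    funext j
    rw [hode (j : ℕ) j.isLt, Finset.mul_sum]
    exact Finset.sum_congr rfl fun k _ => by
      rw [mul_smul_comm, smul_mul_assoc]
  have hsum := det_updateRow_finsum M (Fin.last m) (Finset.range (m + 2))
    (fun k => P.coeff k • Polynomial.C (X : R)) (fun k => fun j => ddt^[k] (u (j : ℕ)))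
  have hupdlt : ∀ k, k < m →
      (M.updateRow (Fin.last m) fun j => ddt^[k] (u (j : ℕ))).det = 0 := by
    intro k hk
    have hne : (⟨k, by omega⟩ : Fin (m + 1)) ≠ Fin.last m := by
      intro hc
      have h2 : k = m := by simpa using Fin.ext_iff.mp hc
      omega
    refine Matrix.det_zero_of_row_eq (i := (⟨k, by omega⟩ : Fin (m + 1)))
      (j := Fin.last m) hne ?_
    funext j
    rw [Matrix.updateRow_ne hne, Matrix.updateRow_self]
    exact hM_apply _ _
  have hupdm : (M.updateRow (Fin.last m) fun j => ddt^[m] (u (j : ℕ))).det = M.det := by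
    have hrw : (fun j : Fin (m + 1) => ddt^[m] (u (j : ℕ))) = M (Fin.last m) := by
      funext j
      rw [hM_apply, Fin.val_last]
    rw [hrw, Matrix.updateRow_eq_self]
  have hV : (M.updateRow (Fin.last m) fun j => ddt^[m + 1] (u (j : ℕ))).det =
      (P.coeff (m + 1) • Polynomial.C (X : R)) *
        (M.updateRow (Fin.last m) fun j => ddt^[m + 1] (u (j : ℕ))).det +
      (P.coeff m • Polynomial.C (X : R)) * M.det := by
    conv_lhs => rw [hode']
    rw [hsum]
    rw [Finset.sum_range_succ, Finset.sum_range_succ]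
    have hzero : ∑ k ∈ Finset.range m, (P.coeff k • Polynomial.C (X : R)) *
        (M.updateRow (Fin.last m) fun j => ddt^[k] (u (j : ℕ))).det = 0 := by
      refine Finset.sum_eq_zero fun k hk => ?_
      rw [hupdlt k (Finset.mem_range.mp hk), mul_zero]
    rw [hzero, zero_add, hupdm]
    ring
  rw [hstep1]
  calc (M.updateRow (Fin.last m) fun j => ddt^[m + 1] (u (j : ℕ))).det
      = (P.coeff (m + 1) • Polynomial.C (X : R)) *
          (M.updateRow (Fin.last m) fun j => ddt^[m + 1] (u (j : ℕ))).det +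
        (P.coeff m • Polynomial.C (X : R)) * M.det := hV
    _ = P.coeff (m + 1) • (Polynomial.C (X : R) *
          (M.updateRow (Fin.last m) fun j => ddt^[m + 1] (u (j : ℕ))).det) +
        P.coeff m • (Polynomial.C (X : R) * M.det) := by
        rw [smul_mul_assoc, smul_mul_assoc]

/-! ### Section 7 : coefficients of the operator polynomial -/

set_option maxHeartbeats 1000000 in
lemma prodlin (n : ℕ) (c : ℕ → ℚ) (s : Finset ℕ) :
    (∏ r ∈ s, ((n : ℚ) • Polynomial.X + Polynomial.C (c r))).natDegree ≤ s.card ∧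
    (∏ r ∈ s, ((n : ℚ) • Polynomial.X + Polynomial.C (c r))).coeff s.card =
      (n : ℚ) ^ s.card ∧
    (1 ≤ s.card →
      (∏ r ∈ s, ((n : ℚ) • Polynomial.X + Polynomial.C (c r))).coeff (s.card - 1) =
        (n : ℚ) ^ (s.card - 1) * ∑ r ∈ s, c r) := by
  classical
  induction s using Finset.induction_on with
  | empty =>
      refine ⟨?_, ?_, ?_⟩
      · rw [Finset.prod_empty, Finset.card_empty]
        exact Polynomial.natDegree_one.le
      · rw [Finset.prod_empty, Finset.card_empty, pow_zero, Polynomial.coeff_one_zero]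
      · intro h
        simp at h
  | @insert a s ha ih =>
      obtain ⟨ihdeg, ihtop, ihsub⟩ := ih
      set Q : Polynomial ℚ := ∏ r ∈ s, ((n : ℚ) • Polynomial.X + Polynomial.C (c r)) with hQ
      have hfac : ((n : ℚ) • Polynomial.X + Polynomial.C (c a)) =
          Polynomial.C (n : ℚ) * Polynomial.X + Polynomial.C (c a) := by
        rw [Polynomial.smul_eq_C_mul]
      have hprod : (∏ r ∈ insert a s, ((n : ℚ) • Polynomial.X + Polynomial.C (c r))) =
          (Polynomial.C (n : ℚ) * Polynomial.X + Polynomial.C (c a)) * Q := by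
        rw [Finset.prod_insert ha, hfac]
      have hcard : (insert a s).card = s.card + 1 := Finset.card_insert_of_notMem ha
      have hcoeff : ∀ k : ℕ, ((Polynomial.C (n : ℚ) * Polynomial.X + Polynomial.C (c a)) * Q).coeff k
          = (n : ℚ) * (Polynomial.X * Q).coeff k + c a * Q.coeff k := by
        intro k
        rw [add_mul, Polynomial.coeff_add, mul_assoc, Polynomial.coeff_C_mul,
          Polynomial.coeff_C_mul]
      refine ⟨?_, ?_, ?_⟩
      · rw [hprod, hcard]
        refine le_trans (Polynomial.natDegree_mul_le) ?_
        have h1 : (Polynomial.C (n : ℚ) * Polynomial.X + Polynomial.C (c a)).natDegree ≤ 1 := by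
          refine le_trans (Polynomial.natDegree_add_le _ _) ?_
          simp only [max_le_iff]
          exact ⟨le_trans (Polynomial.natDegree_mul_le) (by simp), by simp⟩
        omega
      · rw [hprod, hcard, hcoeff]
        rw [Polynomial.coeff_X_mul, ihtop,
          Polynomial.coeff_eq_zero_of_natDegree_lt (lt_of_le_of_lt ihdeg (by omega)),
          mul_zero, add_zero, pow_succ]
        ring
      · intro _
        rw [hprod, hcard, Nat.add_sub_cancel, hcoeff]
        rcases Nat.eq_zero_or_pos s.card with h0 | hpos
        · have hs : s = ∅ := Finset.card_eq_zero.mp h0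
          subst hs
          simp [hQ]
        · obtain ⟨t, ht⟩ : ∃ t, s.card = t + 1 := ⟨s.card - 1, by omega⟩
          have ihsub' := ihsub (by omega)
          rw [ht, show t + 1 - 1 = t by omega] at ihsub'
          rw [ht] at ihtop ⊢
          rw [Polynomial.coeff_X_mul, ihsub', ihtop, Finset.sum_insert ha, pow_succ]
          ring

lemma Ppoly_coeff_top (n : ℕ) (c : ℕ → ℚ) : (Ppoly n c).coeff n = (n : ℚ) ^ n := by
  have h := (prodlin n c (Finset.Icc 1 n)).2.1
  rw [Nat.card_Icc, show n + 1 - 1 = n by omega] at h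
  exact h

lemma Ppoly_coeff_sub (n : ℕ) (hn : 1 ≤ n) (c : ℕ → ℚ) :
    (Ppoly n c).coeff (n - 1) = (n : ℚ) ^ (n - 1) * ∑ r ∈ Finset.Icc 1 n, c r := by
  have h := (prodlin n c (Finset.Icc 1 n)).2.2
  rw [Nat.card_Icc, show n + 1 - 1 = n by omega] at h
  exact h (by omega)

lemma Dq_sub (f g : R) : Dq (f - g) = Dq f - Dq g := by
  ext d
  simp only [Dq_coeff, map_sub, mul_sub]

lemma eq_C_of_Dq_zero (f : R) (h : Dq f = 0) : f = C (constantCoeff f) := by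
  ext d
  rw [PowerSeries.coeff_C]
  rcases eq_or_ne d 0 with hd | hd
  · subst hd
    rw [if_pos rfl, PowerSeries.coeff_zero_eq_constantCoeff_apply]
  · rw [if_neg hd]
    have h1 : coeff d (Dq f) = 0 := by rw [h, map_zero]
    rw [Dq_coeff] at h1
    have h2 : (d : ℚ) ≠ 0 := Nat.cast_ne_zero.mpr hd
    exact (mul_eq_zero.mp h1).resolve_left h2

/-! ### Final assembly -/

theorem stmt8' (n : ℕ) (hn : 2 ≤ n) :
    (∏ p ∈ Finset.range n, (Ipq n p p).coeff 0) *
        (1 - PowerSeries.C ((n : ℚ) ^ n) * X) = 1 := by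
  obtain ⟨m, rfl⟩ : ∃ m, n = m + 1 := ⟨n - 1, by omega⟩
  -- notation
  set a : ℚ := ((m + 1 : ℕ) : ℚ) ^ (m + 1) with hadef
  set P : R := ∏ p ∈ Finset.range (m + 1), gam (m + 1) p p with hPdef
  set VA : R := ∏ j ∈ Finset.range (m + 1), gam (m + 1) j j ^ (m + 1 - j) with hVAdef
  set VB : R := ∏ j ∈ Finset.range m, gam (m + 1) j j ^ (m - j) with hVBdef
  have hprod0 : (∏ p ∈ Finset.range (m + 1), (Ipq (m + 1) p p).coeff 0) = P :=
    Finset.prod_congr rfl fun p _ => by rw [Ipq_coeff_zero]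
  -- Wronskian values
  have hWA : (Matrix.det (Matrix.of fun i j : Fin (m + 1) =>
      ddt^[(i : ℕ)] (I0 (m + 1) (j : ℕ)))) = Polynomial.C VA := by
    have h1 : (Matrix.of fun i j : Fin (m + 1) => ddt^[(i : ℕ)] (I0 (m + 1) (j : ℕ))) =
        Matrix.of fun i j : Fin (m + 1) => ddt^[(i : ℕ)] (Ipq (m + 1) 0 (0 + (j : ℕ))) := by
      refine Matrix.ext fun i j => ?_
      show ddt^[(i : ℕ)] (I0 (m + 1) (j : ℕ)) = ddt^[(i : ℕ)] (Ipq (m + 1) 0 (0 + (j : ℕ)))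
      rw [Nat.zero_add]
      rfl
    rw [h1, wron_Ipq]
    rw [Finset.prod_congr rfl (fun j (_ : j ∈ Finset.range (m + 1)) =>
      show (Polynomial.C (gam (m + 1) (0 + j) (0 + j))) ^ (m + 1 - j) =
        Polynomial.C ((gam (m + 1) j j) ^ (m + 1 - j)) by rw [Nat.zero_add, map_pow]),
      ← map_prod]
  have hWB : (Matrix.det (Matrix.of fun i j : Fin (m + 1) =>
      ddt^[(i : ℕ)] (Phi (j : ℕ) (hgTermB (m + 1))))) = Polynomial.C VB := by
    have h0 : (fun j : Fin (m + 1) => Phi (j : ℕ) (hgTermB (m + 1))) 0 = 1 := by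
      show Phi ((0 : Fin (m + 1)) : ℕ) (hgTermB (m + 1)) = 1
      rw [show ((0 : Fin (m + 1)) : ℕ) = 0 from rfl]
      exact z_zero (m + 1) (by omega)
    have h2 := wron_expand (fun j : Fin (m + 1) => Phi (j : ℕ) (hgTermB (m + 1))) h0
    rw [h2]
    have h3 : (Matrix.of fun i j : Fin m =>
        ddt^[(i : ℕ)] (ddt ((fun j : Fin (m + 1) => Phi (j : ℕ) (hgTermB (m + 1))) j.succ))) =
        Matrix.of fun i j : Fin m => ddt^[(i : ℕ)] (Ipq (m + 1) 0 (0 + (j : ℕ))) := by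
      refine Matrix.ext fun i j => ?_
      show ddt^[(i : ℕ)] (ddt (Phi ((j.succ : Fin (m + 1)) : ℕ) (hgTermB (m + 1)))) =
        ddt^[(i : ℕ)] (Ipq (m + 1) 0 (0 + (j : ℕ)))
      rw [Fin.val_succ, ddt_z (m + 1) (j : ℕ) (by omega), Nat.zero_add]
      rfl
    rw [h3, wron_Ipq]
    rw [Finset.prod_congr rfl (fun j (_ : j ∈ Finset.range m) =>
      show (Polynomial.C (gam (m + 1) (0 + j) (0 + j))) ^ (m - j) =
        Polynomial.C ((gam (m + 1) j j) ^ (m - j)) by rw [Nat.zero_add, map_pow]),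
      ← map_prod]
  -- the two Wronskian ODEs, pushed down to R
  have hEA : Dq VA = C a * (X * Dq VA) +
      C (((m + 1 : ℕ) : ℚ) ^ m * ∑ r ∈ Finset.Icc 1 (m + 1), ((r : ℕ) : ℚ)) * (X * VA) := by
    have h := wron_ode m (Ppoly (m + 1) fun r => ((r : ℕ) : ℚ)) (fun q => I0 (m + 1) q)
      (fun q hq => ODE_y (m + 1) q (by omega) hq)
    rw [hWA, ddt_C] at h
    have hc1 : (Ppoly (m + 1) fun r => ((r : ℕ) : ℚ)).coeff (m + 1) = a := by
      rw [Ppoly_coeff_top]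
    have hc0 : (Ppoly (m + 1) fun r => ((r : ℕ) : ℚ)).coeff m =
        ((m + 1 : ℕ) : ℚ) ^ m * ∑ r ∈ Finset.Icc 1 (m + 1), ((r : ℕ) : ℚ) := by
      have := Ppoly_coeff_sub (m + 1) (by omega) fun r => ((r : ℕ) : ℚ)
      rw [show m + 1 - 1 = m by omega] at this
      exact this
    rw [hc1, hc0] at h
    have h2 : Polynomial.C (Dq VA) = Polynomial.C (a • (X * Dq VA) +
        (((m + 1 : ℕ) : ℚ) ^ m * ∑ r ∈ Finset.Icc 1 (m + 1), ((r : ℕ) : ℚ)) • (X * VA)) := by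
      rw [map_add, ← Polynomial.smul_C, ← Polynomial.smul_C, map_mul, map_mul]
      exact h
    have h3 := Polynomial.C_injective h2
    rw [PowerSeries.smul_eq_C_mul, PowerSeries.smul_eq_C_mul] at h3
    exact h3
  have hEB : Dq VB = C a * (X * Dq VB) +
      C (((m + 1 : ℕ) : ℚ) ^ m * ∑ r ∈ Finset.Icc 1 (m + 1), (((r : ℕ) : ℚ) - 1)) *
        (X * VB) := by
    have h := wron_ode m (Ppoly (m + 1) fun r => ((r : ℕ) : ℚ) - 1)
      (fun q => Phi q (hgTermB (m + 1)))
      (fun q hq => ODE_z (m + 1) q (by omega) hq)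
    rw [hWB, ddt_C] at h
    have hc1 : (Ppoly (m + 1) fun r => ((r : ℕ) : ℚ) - 1).coeff (m + 1) = a := by
      rw [Ppoly_coeff_top]
    have hc0 : (Ppoly (m + 1) fun r => ((r : ℕ) : ℚ) - 1).coeff m =
        ((m + 1 : ℕ) : ℚ) ^ m * ∑ r ∈ Finset.Icc 1 (m + 1), (((r : ℕ) : ℚ) - 1) := by
      have := Ppoly_coeff_sub (m + 1) (by omega) fun r => ((r : ℕ) : ℚ) - 1
      rw [show m + 1 - 1 = m by omega] at this
      exact this
    rw [hc1, hc0] at h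
    have h2 : Polynomial.C (Dq VB) = Polynomial.C (a • (X * Dq VB) +
        (((m + 1 : ℕ) : ℚ) ^ m * ∑ r ∈ Finset.Icc 1 (m + 1), (((r : ℕ) : ℚ) - 1)) •
          (X * VB)) := by
      rw [map_add, ← Polynomial.smul_C, ← Polynomial.smul_C, map_mul, map_mul]
      exact h
    have h3 := Polynomial.C_injective h2
    rw [PowerSeries.smul_eq_C_mul, PowerSeries.smul_eq_C_mul] at h3
    exact h3
  -- coefficient arithmetic
  have hcoefs : (((m + 1 : ℕ) : ℚ) ^ m * ∑ r ∈ Finset.Icc 1 (m + 1), ((r : ℕ) : ℚ)) =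
      (((m + 1 : ℕ) : ℚ) ^ m * ∑ r ∈ Finset.Icc 1 (m + 1), (((r : ℕ) : ℚ) - 1)) + a := by
    have hsum : (∑ r ∈ Finset.Icc 1 (m + 1), ((r : ℕ) : ℚ)) =
        (∑ r ∈ Finset.Icc 1 (m + 1), (((r : ℕ) : ℚ) - 1)) + ((m + 1 : ℕ) : ℚ) := by
      have h1 : ∀ r ∈ Finset.Icc 1 (m + 1), ((r : ℕ) : ℚ) - (((r : ℕ) : ℚ) - 1) = 1 :=
        fun r _ => by ring
      have h0 : (∑ r ∈ Finset.Icc 1 (m + 1), ((r : ℕ) : ℚ)) -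
          (∑ r ∈ Finset.Icc 1 (m + 1), (((r : ℕ) : ℚ) - 1)) = ((m + 1 : ℕ) : ℚ) := by
        rw [← Finset.sum_sub_distrib, Finset.sum_congr rfl h1, Finset.sum_const, Nat.card_Icc,
          show m + 1 + 1 - 1 = m + 1 by omega, nsmul_eq_mul, mul_one]
      linarith
    rw [hsum, hadef, mul_add, pow_succ]
  -- VA = P * VB
  have hVAB : VA = P * VB := by
    rw [hVAdef, hPdef, hVBdef]
    rw [Finset.prod_congr rfl (fun j (hj : j ∈ Finset.range (m + 1)) =>
      show gam (m + 1) j j ^ (m + 1 - j) = gam (m + 1) j j * gam (m + 1) j j ^ (m - j) by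
        rw [← pow_succ']
        congr 1
        have := Finset.mem_range.mp hj
        omega)]
    rw [Finset.prod_mul_distrib]
    congr 1
    rw [Finset.prod_range_succ, Nat.sub_self, pow_zero, mul_one]
  -- constant coefficients
  have hgc : ∀ p, constantCoeff (gam (m + 1) p p) = 1 := fun p => gam_constantCoeff _ _
  have hVBc : constantCoeff VB = 1 := by
    rw [hVBdef, map_prod]
    refine Finset.prod_eq_one fun j _ => ?_
    rw [map_pow, hgc, one_pow]
  have hPc : constantCoeff P = 1 := by
    rw [hPdef, map_prod]
    exact Finset.prod_eq_one fun j _ => hgc j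
  have hVBne : VB ≠ 0 := fun h => by
    rw [h, map_zero] at hVBc
    exact one_ne_zero hVBc.symm
  -- cancellation
  have hDqVA : Dq VA = Dq P * VB + P * Dq VB := by rw [hVAB, Dq_mul]
  have hkey : Dq P * VB = (C a * X * Dq P + C a * X * P) * VB := by
    have hEA' : Dq P * VB + P * Dq VB = C a * (X * (Dq P * VB + P * Dq VB)) +
        (C (((m + 1 : ℕ) : ℚ) ^ m * ∑ r ∈ Finset.Icc 1 (m + 1), (((r : ℕ) : ℚ) - 1)) +
          C a) * (X * (P * VB)) := by
      rw [← map_add, ← hcoefs, ← hDqVA, ← hVAB]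
      exact hEA
    linear_combination hEA' - P * hEB
  have hG : Dq P = C a * X * Dq P + C a * X * P := mul_right_cancel₀ hVBne hkey
  -- conclude
  rw [hprod0]
  have hDqF : Dq (P * (1 - C a * X)) = 0 := by
    rw [Dq_mul, Dq_sub, Dq_one, Dq_mul, Dq_C, Dq_X]
    linear_combination hG
  have hF := eq_C_of_Dq_zero _ hDqF
  have hFc : constantCoeff (P * (1 - C a * X)) = 1 := by
    rw [map_mul, hPc, one_mul, map_sub, map_one, map_mul, PowerSeries.constantCoeff_X,
      mul_zero, sub_zero]
  rw [hF, hFc, map_one]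


/-- Zagier–Zinger identity (3.4): for `n ≥ 2`,
`I_{0,0}(t) I_{1,1}(t) ⋯ I_{n-1,n-1}(t) (1 - n^n e^t) = 1`
as power series in `e^t`. -/
theorem stmt8 (n : ℕ) (hn : 2 ≤ n) :
    (∏ p ∈ Finset.range n, (Ipq n p p).coeff 0) *
        (1 - PowerSeries.C ((n : ℚ) ^ n) * X) = 1 := by
  exact stmt8' n hn
end
end

section
/- Let Z*(ℏ, u) = ∑_{d≥1} Z_d(ℏ) u^d be a formal power series in u whose coefficients Z_d are rational functions of ℏ over a field K of characteristic 0. Suppose there exist power series η(u) ∈ K[[u]] and Z̄*(ℏ, u) ∈ K(ℏ)[[u]], both with zero constant term in u, such that Z̄* is regular at ℏ = 0 and 1 + Z*(ℏ,u) = e^{η(u)/ℏ}(1 + Z̄*(ℏ,u)) as identities of formal power series in u with rational-function coefficients. Then the regularizing pair (η, Z̄*) is unique, and η(u) = Res_{ℏ=0} { ln(1 + Z*(ℏ,u)) }, where the logarithm is the formal power series log applied in the u-adic topology and Res_{ℏ=0} extracts the ℏ^{-1} Laurent coefficient of each u-coefficient. -/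
open PowerSeries

noncomputable section

variable (K : Type*) [Field K]

open scoped RatFunc in
/-- The coefficient of `ℏ^k` in the Laurent expansion at `ℏ = 0` of a rational
function. -/
def lcoeff (k : ℤ) (f : RatFunc K) : K := ((algebraMap (RatFunc K) (LaurentSeries K)) f).coeff k

/-- `Z ∈ K(ℏ)[[u]]` is regular at `ℏ = 0` if each `u`-coefficient has no pole
at `ℏ = 0`. -/
def RegularAtZero (Z : PowerSeries (RatFunc K)) : Prop :=
  ∀ m : ℕ, ∀ k : ℤ, k < 0 → lcoeff K k (PowerSeries.coeff m Z) = 0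

/-- `e^{η(u)/ℏ}` as an element of `K(ℏ)[[u]]`: for `η` with zero constant term,
the `u^m`-coefficient of `∑_p η^p ℏ^{-p}/p!` only involves `p ≤ m`. -/
def expDiv (η : PowerSeries K) : PowerSeries (RatFunc K) :=
  PowerSeries.mk fun m => ∑ p ∈ Finset.range (m + 1),
    (RatFunc.X : RatFunc K)⁻¹ ^ p *
      RatFunc.C ((Nat.factorial p : K)⁻¹ * PowerSeries.coeff m (η ^ p))

/-- `ln(1 + Z)` for `Z ∈ K(ℏ)[[u]]` with zero `u`-constant term, via the formal
logarithm series (the `u^m`-coefficient only involves powers `Z^j` with `j ≤ m`). -/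
def logOne (Z : PowerSeries (RatFunc K)) : PowerSeries (RatFunc K) :=
  PowerSeries.mk fun m => ∑ j ∈ Finset.Icc 1 m,
    (-1 : RatFunc K) ^ (j - 1) * (j : RatFunc K)⁻¹ * PowerSeries.coeff m (Z ^ j)

/-- The coefficientwise residue at `ℏ = 0` of an element of `K(ℏ)[[u]]`. -/
def Res (Z : PowerSeries (RatFunc K)) : PowerSeries K :=
  PowerSeries.mk fun m => lcoeff K (-1) (PowerSeries.coeff m Z)

namespace Stmt12Aux

variable {K}

/-! ### Laurent-coefficient lemmas -/

/-- `lcoeff` as an additive monoid hom. -/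
def lcoeffHom (k : ℤ) : RatFunc K →+ K where
  toFun := lcoeff K k
  map_zero' := by simp [lcoeff]
  map_add' f g := by simp [lcoeff, map_add, HahnSeries.coeff_add]

lemma lcoeff_add (k : ℤ) (f g : RatFunc K) :
    lcoeff K k (f + g) = lcoeff K k f + lcoeff K k g :=
  map_add (lcoeffHom k) f g

lemma lcoeff_sum {ι : Type*} (k : ℤ) (s : Finset ι) (F : ι → RatFunc K) :
    lcoeff K k (∑ i ∈ s, F i) = ∑ i ∈ s, lcoeff K k (F i) :=
  map_sum (lcoeffHom k) F s

open scoped RatFunc in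
lemma coe_C' (c : K) :
    algebraMap (RatFunc K) (LaurentSeries K) (RatFunc.C c) = HahnSeries.C c := by
  rw [← RatFunc.algebraMap_C, ← IsScalarTower.algebraMap_apply]
  simp

open scoped RatFunc in
lemma coe_X_inv : (algebraMap (RatFunc K) (LaurentSeries K)) (RatFunc.X)⁻¹ = HahnSeries.single (-1 : ℤ) (1 : K) := by
  rw [map_inv₀, RatFunc.coe_X]
  refine inv_eq_of_mul_eq_one_right ?_
  rw [HahnSeries.single_mul_single]
  norm_num

lemma lcoeff_Xinv_C (c : K) : lcoeff K (-1) ((RatFunc.X)⁻¹ * RatFunc.C c) = c := by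
  rw [lcoeff, map_mul, coe_X_inv, coe_C', HahnSeries.C_apply,
    HahnSeries.single_mul_single]
  simp

lemma lcoeff_C (k : ℤ) (hk : k ≠ 0) (c : K) : lcoeff K k (RatFunc.C c) = 0 := by
  rw [lcoeff, coe_C', HahnSeries.C_apply,
    HahnSeries.coeff_single_of_ne hk]

lemma lcoeff_C_mul (k : ℤ) (c : K) (f : RatFunc K) :
    lcoeff K k (RatFunc.C c * f) = c * lcoeff K k f := by
  rw [lcoeff, lcoeff, map_mul, coe_C', HahnSeries.C_apply,
    HahnSeries.coeff_single_zero_mul]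

/-! ### Regularity as a "subring" predicate -/

/-- A rational function is regular at 0. -/
def RegF (f : RatFunc K) : Prop := ∀ k : ℤ, k < 0 → lcoeff K k f = 0

lemma RegF_C (c : K) : RegF (RatFunc.C c) := fun k hk => lcoeff_C k hk.ne c

lemma RegF.mul {f g : RatFunc K} (hf : RegF f) (hg : RegF g) : RegF (f * g) := by
  intro k hk
  rw [lcoeff, map_mul, HahnSeries.coeff_mul]
  apply Finset.sum_eq_zero
  rintro ⟨i, j⟩ hij
  rw [Finset.mem_addAntidiagonal] at hij
  obtain ⟨hi, hj, hsum⟩ := hij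
  rw [HahnSeries.mem_support] at hi hj
  by_cases h1 : i < 0
  · exact absurd (hf i h1) hi
  by_cases h2 : j < 0
  · exact absurd (hg j h2) hj
  omega

lemma regular_mul {A B : PowerSeries (RatFunc K)} (hA : RegularAtZero K A)
    (hB : RegularAtZero K B) : RegularAtZero K (A * B) := by
  intro m k hk
  rw [coeff_mul, lcoeff_sum]
  apply Finset.sum_eq_zero
  rintro ⟨i, j⟩ _
  exact RegF.mul (fun k hk => hA i k hk) (fun k hk => hB j k hk) k hk

lemma regular_one : RegularAtZero K 1 := by
  intro m k hk
  rw [coeff_one]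
  split_ifs with h
  · simpa using lcoeff_C (K := K) k hk.ne 1
  · simpa using lcoeff_C (K := K) k hk.ne 0

lemma regular_pow {A : PowerSeries (RatFunc K)} (hA : RegularAtZero K A) (n : ℕ) :
    RegularAtZero K (A ^ n) := by
  induction n with
  | zero => rw [pow_zero]; exact regular_one
  | succ n ih => rw [pow_succ]; exact regular_mul ih hA

lemma regular_logOne {W : PowerSeries (RatFunc K)} (hW : RegularAtZero K W) :
    RegularAtZero K (logOne K W) := by
  intro m k hk
  rw [logOne, coeff_mk, lcoeff_sum]
  apply Finset.sum_eq_zero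
  intro j _
  have h1 : RegF ((-1 : RatFunc K) ^ (j - 1) * (j : RatFunc K)⁻¹) := by
    have : (-1 : RatFunc K) ^ (j - 1) * (j : RatFunc K)⁻¹
        = RatFunc.C ((-1 : K) ^ (j - 1) * (j : K)⁻¹) := by
      rw [map_mul, map_pow, map_neg, map_one, map_inv₀, map_natCast]
    rw [this]
    exact RegF_C _
  exact (h1.mul (fun k hk => regular_pow hW j m k hk)) k hk

/-! ### Truncation lemmas -/

lemma coeff_pow_eq_zero {R : Type*} [CommSemiring R] {A : PowerSeries R}
    (hA : constantCoeff A = 0) {m p : ℕ} (h : m < p) : coeff m (A ^ p) = 0 :=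
  X_pow_dvd_iff.mp (pow_dvd_pow_of_dvd (X_dvd_iff.mpr hA) p) m h

lemma coeff_pow_mul_zero {R : Type*} [CommSemiring R] {A g : PowerSeries R}
    (hA : constantCoeff A = 0) {m p : ℕ} (h : m < p) : coeff m (A ^ p * g) = 0 :=
  X_pow_dvd_iff.mp (Dvd.dvd.mul_right (pow_dvd_pow_of_dvd (X_dvd_iff.mpr hA) p) g) m h

lemma coeff_mul_congr {A B f : PowerSeries (RatFunc K)} {m : ℕ}
    (h : ∀ j ≤ m, PowerSeries.coeff j A = PowerSeries.coeff j B) :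
    PowerSeries.coeff m (f * A) = PowerSeries.coeff m (f * B) := by
  rw [coeff_mul, coeff_mul]
  refine Finset.sum_congr rfl ?_
  rintro ⟨i, j⟩ hij
  rw [Finset.HasAntidiagonal.mem_antidiagonal] at hij
  rw [h j (by omega)]

/-- Truncated logarithm. -/
def logT (Z : PowerSeries (RatFunc K)) (N : ℕ) : PowerSeries (RatFunc K) :=
  ∑ j ∈ Finset.range (N + 1),
    PowerSeries.C ((-1 : RatFunc K) ^ (j - 1) * (j : RatFunc K)⁻¹) * Z ^ j

lemma coeff_logT (Z : PowerSeries (RatFunc K)) (N m : ℕ) :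
    PowerSeries.coeff m (logT Z N) = ∑ j ∈ Finset.range (N + 1),
      (-1 : RatFunc K) ^ (j - 1) * (j : RatFunc K)⁻¹ * PowerSeries.coeff m (Z ^ j) := by
  rw [logT, map_sum]
  exact Finset.sum_congr rfl fun j _ => coeff_C_mul _ _ _

lemma coeff_logOne_eq {Z : PowerSeries (RatFunc K)} (hZ : constantCoeff Z = 0)
    {m N : ℕ} (h : m ≤ N) :
    PowerSeries.coeff m (logOne K Z) = PowerSeries.coeff m (logT Z N) := by
  rw [logOne, coeff_mk, coeff_logT]
  refine Finset.sum_subset ?_ ?_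
  · intro j hj
    rw [Finset.mem_Icc] at hj
    rw [Finset.mem_range]
    omega
  · intro j hj hj'
    rw [Finset.mem_range] at hj
    rw [Finset.mem_Icc] at hj'
    rcases Nat.eq_zero_or_pos j with h0 | h0
    · subst h0; simp
    · have : m < j := by omega
      rw [coeff_pow_eq_zero hZ this, mul_zero]

section CharZ

variable [CharZero K]

instance : CharZero (RatFunc K) :=
  charZero_of_injective_algebraMap (algebraMap K (RatFunc K)).injective

/-- Log-derivative identity: `(1+Z) * (log(1+Z))' = Z'`. -/
lemma log_deriv {Z : PowerSeries (RatFunc K)} (hZ : constantCoeff Z = 0) :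
    (1 + Z) * d⁄dX (RatFunc K) (logOne K Z) = d⁄dX (RatFunc K) Z := by
  ext m
  have hN : ∀ j ≤ m, PowerSeries.coeff j (d⁄dX (RatFunc K) (logOne K Z))
      = PowerSeries.coeff j (d⁄dX (RatFunc K) (logT Z (m + 1))) := by
    intro j hj
    rw [coeff_derivative, coeff_derivative, coeff_logOne_eq hZ (N := m + 1) (by omega)]
  rw [coeff_mul_congr hN]
  have hDT : d⁄dX (RatFunc K) (logT Z (m + 1))
      = (∑ i ∈ Finset.range (m + 1), (-Z) ^ i) * d⁄dX (RatFunc K) Z := by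
    rw [logT, map_sum, Finset.sum_range_succ']
    have h0 : d⁄dX (RatFunc K) (PowerSeries.C
        ((-1 : RatFunc K) ^ (0 - 1) * ((0 : ℕ) : RatFunc K)⁻¹) * Z ^ 0) = 0 := by
      simp
    rw [h0, add_zero, Finset.sum_mul]
    refine Finset.sum_congr rfl fun i _ => ?_
    rw [Derivation.leibniz, Derivation.leibniz_pow, derivative_C, smul_zero, add_zero,
      smul_eq_mul]
    simp only [Nat.add_sub_cancel]
    rw [smul_eq_mul, nsmul_eq_mul]
    have hc : ((i + 1 : ℕ) : PowerSeries (RatFunc K))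
        = PowerSeries.C ((i + 1 : ℕ) : RatFunc K) := by
      rw [map_natCast]
    rw [hc]
    have hne : ((i + 1 : ℕ) : RatFunc K) ≠ 0 := Nat.cast_ne_zero.mpr (Nat.succ_ne_zero i)
    have key : PowerSeries.C ((-1 : RatFunc K) ^ i * ((i + 1 : ℕ) : RatFunc K)⁻¹)
        * PowerSeries.C ((i + 1 : ℕ) : RatFunc K)
        = PowerSeries.C ((-1 : RatFunc K) ^ i) := by
      rw [← map_mul, mul_assoc, inv_mul_cancel₀ hne, mul_one]
    calc PowerSeries.C ((-1 : RatFunc K) ^ i * ((i + 1 : ℕ) : RatFunc K)⁻¹)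
          * (PowerSeries.C ((i + 1 : ℕ) : RatFunc K)
            * (Z ^ i * d⁄dX (RatFunc K) Z))
        = (PowerSeries.C ((-1 : RatFunc K) ^ i * ((i + 1 : ℕ) : RatFunc K)⁻¹)
          * PowerSeries.C ((i + 1 : ℕ) : RatFunc K))
          * (Z ^ i * d⁄dX (RatFunc K) Z) := by ring
      _ = (-Z) ^ i * d⁄dX (RatFunc K) Z := by
          rw [key, map_pow, map_neg, map_one, neg_pow]
          ring
  rw [hDT, ← mul_assoc]
  have geom : (1 + Z) * (∑ i ∈ Finset.range (m + 1), (-Z) ^ i) = 1 - (-Z) ^ (m + 1) := by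
    have hg := geom_sum_mul (-Z) (m + 1)
    linear_combination -hg
  rw [geom, sub_mul, one_mul, map_sub,
    coeff_pow_mul_zero (by simp [hZ]) (Nat.lt_succ_self m), sub_zero]

/-- Truncated exponential. -/
def expT (η : PowerSeries K) (N : ℕ) : PowerSeries (RatFunc K) :=
  ∑ p ∈ Finset.range (N + 1),
    PowerSeries.C
      ((RatFunc.X : RatFunc K)⁻¹ ^ p * RatFunc.C ((p.factorial : K)⁻¹))
      * (PowerSeries.map (RatFunc.C : K →+* RatFunc K) η) ^ p

lemma coeff_expT (η : PowerSeries K) (N m : ℕ) :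
    PowerSeries.coeff m (expT η N) = ∑ p ∈ Finset.range (N + 1),
      (RatFunc.X : RatFunc K)⁻¹ ^ p *
        RatFunc.C ((p.factorial : K)⁻¹ * PowerSeries.coeff m (η ^ p)) := by
  rw [expT, map_sum]
  refine Finset.sum_congr rfl fun p _ => ?_
  rw [coeff_C_mul, ← map_pow, coeff_map, map_mul (RatFunc.C : K →+* RatFunc K), mul_assoc]

lemma coeff_expDiv_eq {η : PowerSeries K} (hη : constantCoeff η = 0) {m N : ℕ} (h : m ≤ N) :
    PowerSeries.coeff m (expDiv K η) = PowerSeries.coeff m (expT η N) := by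
  rw [expDiv, coeff_mk, coeff_expT]
  refine Finset.sum_subset ?_ ?_
  · intro p hp
    rw [Finset.mem_range] at *
    omega
  · intro p hp hp'
    rw [Finset.mem_range] at hp hp'
    have hmp : m < p := by omega
    rw [coeff_pow_eq_zero hη hmp, mul_zero, map_zero, mul_zero]

lemma derivative_map' (η : PowerSeries K) :
    d⁄dX (RatFunc K) (PowerSeries.map (RatFunc.C : K →+* RatFunc K) η)
      = PowerSeries.map (RatFunc.C : K →+* RatFunc K) (d⁄dX K η) := by
  ext m
  simp only [coeff_derivative, coeff_map, map_mul, map_add, map_one, map_natCast]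

lemma constantCoeff_expDiv (η : PowerSeries K) :
    constantCoeff (expDiv K η) = 1 := by
  have h : PowerSeries.coeff 0 (expDiv K η) = 1 := by
    rw [expDiv, coeff_mk, Finset.sum_range_one]
    simp
  rwa [coeff_zero_eq_constantCoeff] at h

lemma derivative_expDiv (η : PowerSeries K) (hη : constantCoeff η = 0) :
    d⁄dX (RatFunc K) (expDiv K η)
      = PowerSeries.C (RatFunc.X : RatFunc K)⁻¹
        * PowerSeries.map (RatFunc.C : K →+* RatFunc K) (d⁄dX K η) * expDiv K η := by
  ext m
  have h1 : PowerSeries.coeff m (d⁄dX (RatFunc K) (expDiv K η))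
      = PowerSeries.coeff m (d⁄dX (RatFunc K) (expT η (m + 1))) := by
    rw [coeff_derivative, coeff_derivative, coeff_expDiv_eq hη (N := m + 1) (le_refl _)]
  rw [h1]
  have hexp : ∀ j ≤ m, PowerSeries.coeff j (expT η m) = PowerSeries.coeff j (expDiv K η) :=
    fun j hj => (coeff_expDiv_eq hη (N := m) hj).symm
  have h2 : d⁄dX (RatFunc K) (expT η (m + 1))
      = PowerSeries.C (RatFunc.X : RatFunc K)⁻¹
        * PowerSeries.map (RatFunc.C : K →+* RatFunc K) (d⁄dX K η) * expT η m := by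
    rw [expT, map_sum, Finset.sum_range_succ']
    have h0 : d⁄dX (RatFunc K) (PowerSeries.C
        ((RatFunc.X : RatFunc K)⁻¹ ^ 0 * RatFunc.C (((0 : ℕ).factorial : K)⁻¹))
        * (PowerSeries.map (RatFunc.C : K →+* RatFunc K) η) ^ 0) = 0 := by
      simp
    rw [h0, add_zero]
    rw [expT, Finset.mul_sum]
    refine Finset.sum_congr rfl fun p _ => ?_
    rw [Derivation.leibniz, Derivation.leibniz_pow, derivative_C, smul_zero, add_zero,
      smul_eq_mul, smul_eq_mul, nsmul_eq_mul]
    simp only [Nat.add_sub_cancel]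
    rw [derivative_map']
    have hc : ((p + 1 : ℕ) : PowerSeries (RatFunc K))
        = PowerSeries.C ((p + 1 : ℕ) : RatFunc K) := by
      rw [map_natCast]
    rw [hc]
    have hfac : (((p + 1).factorial : K))⁻¹ * ((p + 1 : ℕ) : K) = ((p.factorial : K))⁻¹ := by
      have hf1 : ((p + 1).factorial : K) = ((p + 1 : ℕ) : K) * (p.factorial : K) := by
        rw [Nat.factorial_succ]
        push_cast
        ring
      have hf2 : ((p + 1 : ℕ) : K) ≠ 0 := Nat.cast_ne_zero.mpr (Nat.succ_ne_zero p)
      have hf3 : ((p.factorial : K)) ≠ 0 := Nat.cast_ne_zero.mpr (Nat.factorial_ne_zero p)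
      field_simp [hf1]
      exact hf1.symm
    have key : (RatFunc.X : RatFunc K)⁻¹ ^ (p + 1) * RatFunc.C (((p + 1).factorial : K)⁻¹)
          * ((p + 1 : ℕ) : RatFunc K)
        = (RatFunc.X : RatFunc K)⁻¹
          * ((RatFunc.X : RatFunc K)⁻¹ ^ p * RatFunc.C ((p.factorial : K)⁻¹)) := by
      have hn : ((p + 1 : ℕ) : RatFunc K) = RatFunc.C ((p + 1 : ℕ) : K) := by
        rw [map_natCast]
      rw [hn, mul_assoc, ← map_mul, hfac, pow_succ]
      ring
    calc PowerSeries.C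
          ((RatFunc.X : RatFunc K)⁻¹ ^ (p + 1) * RatFunc.C (((p + 1).factorial : K)⁻¹))
          * (PowerSeries.C ((p + 1 : ℕ) : RatFunc K)
            * ((PowerSeries.map (RatFunc.C : K →+* RatFunc K) η) ^ p
              * PowerSeries.map (RatFunc.C : K →+* RatFunc K) (d⁄dX K η)))
        = PowerSeries.C
            ((RatFunc.X : RatFunc K)⁻¹ ^ (p + 1) * RatFunc.C (((p + 1).factorial : K)⁻¹)
              * ((p + 1 : ℕ) : RatFunc K))
          * ((PowerSeries.map (RatFunc.C : K →+* RatFunc K) η) ^ p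
            * PowerSeries.map (RatFunc.C : K →+* RatFunc K) (d⁄dX K η)) := by
          simp only [map_mul]
          ring
      _ = PowerSeries.C (RatFunc.X : RatFunc K)⁻¹
          * PowerSeries.map (RatFunc.C : K →+* RatFunc K) (d⁄dX K η)
          * (PowerSeries.C
              ((RatFunc.X : RatFunc K)⁻¹ ^ p * RatFunc.C ((p.factorial : K)⁻¹))
            * (PowerSeries.map (RatFunc.C : K →+* RatFunc K) η) ^ p) := by
          rw [key]
          simp only [map_mul]
          ring
  rw [h2]
  exact coeff_mul_congr hexp

lemma lcoeff_mul_natSucc (m : ℕ) (f : RatFunc K) :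
    lcoeff K (-1) (f * ((m : RatFunc K) + 1)) = ((m : K) + 1) * lcoeff K (-1) f := by
  have h : ((m : RatFunc K) + 1) = RatFunc.C ((m : K) + 1) := by
    rw [map_add, map_natCast, map_one]
  rw [h, mul_comm, lcoeff_C_mul]

end CharZ

end Stmt12Aux

open Stmt12Aux

/-- If `Z ∈ K(ℏ)[[u]]` with zero `u`-constant term admits a regularization
`1 + Z = e^{η/ℏ}(1 + W)` with `η ∈ K[[u]]`, `W ∈ K(ℏ)[[u]]` both with zero
`u`-constant term and `W` regular at `ℏ = 0`, then the regularizing pair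
`(η, W)` is unique, and `η = Res_{ℏ=0} ln(1 + Z)`. -/
theorem stmt12 [CharZero K] (Z : PowerSeries (RatFunc K))
    (hZ : PowerSeries.constantCoeff Z = 0)
    (η₁ η₂ : PowerSeries K) (W₁ W₂ : PowerSeries (RatFunc K))
    (hη₁ : PowerSeries.constantCoeff η₁ = 0)
    (hη₂ : PowerSeries.constantCoeff η₂ = 0)
    (hW₁0 : PowerSeries.constantCoeff W₁ = 0)
    (hW₂0 : PowerSeries.constantCoeff W₂ = 0)
    (hW₁ : RegularAtZero K W₁) (hW₂ : RegularAtZero K W₂)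
    (h₁ : 1 + Z = expDiv K η₁ * (1 + W₁))
    (h₂ : 1 + Z = expDiv K η₂ * (1 + W₂)) :
    η₁ = η₂ ∧ W₁ = W₂ ∧ η₁ = Res K (logOne K Z) := by
  classical
  have key : ∀ (η : PowerSeries K) (W : PowerSeries (RatFunc K)),
      PowerSeries.constantCoeff η = 0 → PowerSeries.constantCoeff W = 0 →
      RegularAtZero K W → 1 + Z = expDiv K η * (1 + W) → η = Res K (logOne K Z) := by
    intro η W hη hW0 hreg h
    set c : PowerSeries (RatFunc K) := PowerSeries.C (RatFunc.X : RatFunc K)⁻¹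
      * PowerSeries.map (RatFunc.C : K →+* RatFunc K) (d⁄dX K η) with hc
    have hZ1 : (1 + Z) ≠ 0 := fun h0 => by
      have h' := congrArg (PowerSeries.constantCoeff) h0
      rw [map_add, map_one, hZ, add_zero, map_zero] at h'
      exact one_ne_zero h'
    have hW1 : (1 + W) ≠ 0 := fun h0 => by
      have h' := congrArg (PowerSeries.constantCoeff) h0
      rw [map_add, map_one, hW0, add_zero, map_zero] at h'
      exact one_ne_zero h'
    have lZ := log_deriv hZ
    have lW := log_deriv hW0
    have hD : d⁄dX (RatFunc K) Z = c * (1 + Z) + expDiv K η * d⁄dX (RatFunc K) W := by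
      have h0 := congrArg (d⁄dX (RatFunc K)) h
      rw [map_add, Derivation.map_one_eq_zero, zero_add, Derivation.leibniz, smul_eq_mul,
        smul_eq_mul, map_add, Derivation.map_one_eq_zero, zero_add,
        derivative_expDiv η hη] at h0
      rw [hc]
      linear_combination h0 - (PowerSeries.C (RatFunc.X : RatFunc K)⁻¹
        * PowerSeries.map (RatFunc.C : K →+* RatFunc K) (d⁄dX K η)) * h
    have hT : d⁄dX (RatFunc K) (logOne K Z) = c + d⁄dX (RatFunc K) (logOne K W) := by
      have hu : (1 + Z) * (1 + W) ≠ 0 := mul_ne_zero hZ1 hW1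
      apply mul_left_cancel₀ hu
      linear_combination (1 + W) * lZ - (1 + Z) * lW + (1 + W) * hD
        - (d⁄dX (RatFunc K) W) * h
    ext n
    rcases n with _ | m
    · rw [Res, coeff_mk, logOne, coeff_mk]
      rw [show Finset.Icc 1 0 = (∅ : Finset ℕ) from rfl, Finset.sum_empty]
      simp [lcoeff, coeff_zero_eq_constantCoeff, hη]
    · have hco := congrArg (PowerSeries.coeff m) hT
      rw [map_add, coeff_derivative, coeff_derivative] at hco
      have hcm : PowerSeries.coeff m c
          = (RatFunc.X : RatFunc K)⁻¹
            * RatFunc.C (PowerSeries.coeff (m + 1) η * ((m : K) + 1)) := by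
        rw [hc, coeff_C_mul, coeff_map, coeff_derivative]
      rw [hcm] at hco
      have happ := congrArg (lcoeff K (-1)) hco
      rw [lcoeff_mul_natSucc, lcoeff_add, lcoeff_Xinv_C, lcoeff_mul_natSucc,
        regular_logOne hreg (m + 1) (-1) (by norm_num), mul_zero, add_zero] at happ
      rw [Res, coeff_mk]
      have hne : ((m : K) + 1) ≠ 0 := Nat.cast_add_one_ne_zero m
      apply mul_left_cancel₀ hne
      linear_combination -happ
  have e₁ := key η₁ W₁ hη₁ hW₁0 hW₁ h₁
  have e₂ := key η₂ W₂ hη₂ hW₂0 hW₂ h₂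
  have hηe : η₁ = η₂ := e₁.trans e₂.symm
  have h₂' : 1 + Z = expDiv K η₁ * (1 + W₂) := by rw [hηe]; exact h₂
  have hEne : expDiv K η₁ ≠ 0 := fun h0 => by
    have hco := constantCoeff_expDiv (K := K) η₁
    rw [h0, map_zero] at hco
    exact zero_ne_one hco
  have hW : (1 : PowerSeries (RatFunc K)) + W₁ = 1 + W₂ :=
    mul_left_cancel₀ hEne (h₁.symm.trans h₂')
  exact ⟨hηe, add_left_cancel hW, e₁⟩
end
end

section
/- Let n ≥ 2 and fix i ∈ {1,...,n}. Let K_i ⊆ ℚ(α_1,...,α_n) be the ℚ-linear span of I · Q̃_i[α]^{S_{n-1}} and of α_i^p · Q̃[α]^{S_n} for p ∈ {0,1,...,n-3, n-1}, where I is the ideal of symmetric polynomials generated by σ_1,...,σ_{n-1}, Q̃[α]^{S_n} is the algebra of symmetric rational functions whose denominators are products of the α_j and of differences (α_j - α_k) with j ≠ k, and Q̃_i[α]^{S_{n-1}} is the analogous algebra of functions symmetric in {α_k : k ≠ i} with denominators products of α_i and (α_i - α_k), k ≠ i. Then α_i^{n-2} ∉ K_i; i.e., the span of α_i^{n-2}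 intersects K_i only in 0. -/
open MvPolynomial

noncomputable section

/-- The field `ℚ(α_1, …, α_n)` of rational functions. -/
abbrev FF (n : ℕ) := FractionRing (MvPolynomial (Fin n) ℚ)

/-- `D = ∏_{j ≠ k} (α_j - α_k)`, the product over ordered pairs of distinct
indices. -/
def Dpoly (n : ℕ) : MvPolynomial (Fin n) ℚ :=
  ∏ p ∈ Finset.univ.offDiag, (X p.1 - X p.2)

/-- Membership in the ideal `I` of the ring of symmetric polynomials generated
by `σ_1, …, σ_{n-1}`. -/
def memI (n : ℕ) (g : MvPolynomial (Fin n) ℚ) : Prop :=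
  ∃ c : ℕ → MvPolynomial (Fin n) ℚ, (∀ p, (c p).IsSymmetric) ∧
    g = ∑ p ∈ Finset.Icc 1 (n - 1), c p * esymm (Fin n) ℚ p

/-- `Q̃[α]^{S_n}`: symmetric rational functions whose denominators are products
of the `α_j` and of the differences `α_j - α_k`; equivalently (clearing
denominators symmetrically) those `f` with `f · σ_n^m D^m` a symmetric
polynomial for some `m`. -/
def QS (n : ℕ) : Set (FF n) :=
  {f | ∃ (m : ℕ) (p : MvPolynomial (Fin n) ℚ), p.IsSymmetric ∧
      f * algebraMap (MvPolynomial (Fin n) ℚ) (FF n)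
          ((esymm (Fin n) ℚ n) ^ m * Dpoly n ^ m)
        = algebraMap (MvPolynomial (Fin n) ℚ) (FF n) p}

/-- `Q̃_i[α]^{S_{n-1}}`: rational functions symmetric in `{α_k : k ≠ i}` whose
denominators are products of `α_i` and of `α_i - α_k`, `k ≠ i`; equivalently
those `f` with `f · (α_i ∏_{k≠i}(α_i - α_k))^m` a polynomial invariant under all
permutations fixing `i`, for some `m`. -/
def QSi (n : ℕ) (i : Fin n) : Set (FF n) :=
  {f | ∃ (m : ℕ) (p : MvPolynomial (Fin n) ℚ),
      (∀ σ : Equiv.Perm (Fin n), σ i = i → rename σ p = p) ∧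
      f * algebraMap (MvPolynomial (Fin n) ℚ) (FF n)
          ((X i) ^ m * (∏ k ∈ ({i}ᶜ : Finset (Fin n)), (X i - X k)) ^ m)
        = algebraMap (MvPolynomial (Fin n) ℚ) (FF n) p}

/-- `K_i`: the `ℚ`-linear span of `I · Q̃_i[α]^{S_{n-1}}` together with
`α_i^p · Q̃[α]^{S_n}` for `p ∈ {0, 1, …, n-3, n-1}`. -/
def Ki (n : ℕ) (i : Fin n) : Submodule ℚ (FF n) :=
  Submodule.span ℚ
    ({f | ∃ g h, memI n g ∧ h ∈ QSi n i ∧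
        f = algebraMap (MvPolynomial (Fin n) ℚ) (FF n) g * h} ∪
     {f | ∃ (p : ℕ) (h : FF n), ((p : ℤ) ≤ (n : ℤ) - 3 ∨ p = n - 1) ∧ h ∈ QS n ∧
        f = algebraMap (MvPolynomial (Fin n) ℚ) (FF n) (X i) ^ p * h})


namespace Stmt15Aux
set_option maxHeartbeats 1000000
set_option synthInstance.maxHeartbeats 2000000

abbrev R (n : ℕ) := MvPolynomial (Fin n) ℚ

def SM (n : ℕ) : Submonoid (R n) :=
  Submonoid.closure ((Set.range X) ∪ {q | ∃ a b : Fin n, a ≠ b ∧ q = X a - X b})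

lemma SM_le (n : ℕ) : SM n ≤ nonZeroDivisors (R n) := by
  rw [SM, Submonoid.closure_le]
  rintro q (⟨k, rfl⟩ | ⟨a, b, hab, rfl⟩)
  · exact mem_nonZeroDivisors_of_ne_zero (X_ne_zero _)
  · exact mem_nonZeroDivisors_of_ne_zero (sub_ne_zero.mpr fun h => hab (X_injective h))

def w (n : ℕ) : ℂ := Complex.exp (2 * Real.pi * Complex.I / n)

lemma hw (n : ℕ) (hn : n ≠ 0) : IsPrimitiveRoot (w n) n :=
  Complex.isPrimitiveRoot_exp n hn

lemma w_ne_zero (n : ℕ) : w n ≠ 0 := Complex.exp_ne_zero _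

def e (n : ℕ) (j : ℕ) : R n →ₐ[ℚ] ℂ := aeval fun k : Fin n => w n ^ (j + (k : ℕ))

lemma e_S_ne_zero (n : ℕ) (j : ℕ) {s : R n} (hs : s ∈ SM n) : e n j s ≠ 0 := by
  induction hs using Submonoid.closure_induction with
  | mem x hx =>
    rcases hx with ⟨k, rfl⟩ | ⟨a, b, hab, rfl⟩
    · simp only [e, aeval_X]; exact pow_ne_zero _ (w_ne_zero n)
    · have hne : w n ^ ((a : ℕ)) ≠ w n ^ ((b : ℕ)) := by
        intro h
        rcases Nat.eq_zero_or_pos n with h0 | h0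
        · exact absurd a.isLt (by omega)
        · exact hab (Fin.val_injective ((hw n (by omega)).pow_inj a.isLt b.isLt h))
      simp only [e, map_sub, aeval_X]
      rw [pow_add, pow_add]
      exact sub_ne_zero.mpr fun h => hne (mul_left_cancel₀ (pow_ne_zero _ (w_ne_zero n)) h)
  | one => simp
  | mul x y _ _ hx hy => simpa [map_mul] using mul_ne_zero hx hy

lemma w_pow_mod (n : ℕ) (hn : n ≠ 0) (a : ℕ) : w n ^ (a % n) = w n ^ a := by
  conv_rhs => rw [← Nat.mod_add_div a n]
  rw [pow_add, pow_mul, (hw n hn).pow_eq_one, one_pow, mul_one]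

open Fin.NatCast in
lemma e_symm (n : ℕ) (hn : n ≠ 0) (j : ℕ) {q : R n} (hq : MvPolynomial.IsSymmetric q) :
    e n j q = e n 0 q := by
  haveI : NeZero n := ⟨hn⟩
  set π : Equiv.Perm (Fin n) := Equiv.addLeft (j : Fin n) with hπ
  have hc : (fun k : Fin n => w n ^ (0 + (k : ℕ))) ∘ π = fun k : Fin n => w n ^ (j + (k : ℕ)) := by
    funext k
    simp only [Function.comp_apply, zero_add, hπ, Equiv.coe_addLeft]
    rw [Fin.val_add, Fin.val_natCast, w_pow_mod n hn, pow_add, pow_add,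
      w_pow_mod n hn j]
  have : e n j q = aeval ((fun k : Fin n => w n ^ (0 + (k : ℕ))) ∘ π) q := by rw [hc]; rfl
  rw [this, ← aeval_rename, hq π]; rfl

lemma e_esymm (n : ℕ) (hn : 2 ≤ n) (j p : ℕ) (h1 : 1 ≤ p) (h2 : p ≤ n - 1) :
    e n j (esymm (Fin n) ℚ p) = 0 := by
  have hn0 : n ≠ 0 := by omega
  rw [e_symm n hn0 j (esymm_isSymmetric _ _ p)]
  have hscale : e n 1 (esymm (Fin n) ℚ p) = w n ^ p * e n 0 (esymm (Fin n) ℚ p) := by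
    simp only [e, esymm, map_sum, map_prod, aeval_X, Finset.mul_sum]
    refine Finset.sum_congr rfl fun t ht => ?_
    have hcard : t.card = p := (Finset.mem_powersetCard.mp ht).2
    calc (∏ k ∈ t, w n ^ (1 + (k : ℕ))) = ∏ k ∈ t, (w n * w n ^ (0 + (k : ℕ))) := by
          refine Finset.prod_congr rfl fun k _ => ?_
          rw [pow_add, pow_one, zero_add]
      _ = w n ^ p * ∏ k ∈ t, w n ^ (0 + (k : ℕ)) := by
          rw [Finset.prod_mul_distrib, Finset.prod_const, hcard]
  have hsym := e_symm n hn0 1 (esymm_isSymmetric (Fin n) ℚ p)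
  have hwp : w n ^ p ≠ 1 := by
    intro h
    have := (hw n hn0).pow_eq_one_iff_dvd p |>.mp h
    have := Nat.le_of_dvd (by omega) this
    omega
  have : (w n ^ p - 1) * e n 0 (esymm (Fin n) ℚ p) = 0 := by
    rw [sub_mul, one_mul, ← hscale, hsym, sub_self]
  rcases mul_eq_zero.mp this with h | h
  · exact absurd (by linear_combination h) hwp
  · exact h


abbrev A (n : ℕ) := Localization (SM n)

lemma unitsFF (n : ℕ) : ∀ s : SM n, IsUnit (algebraMap (R n) (FF n) s) := by
  intro s
  refine isUnit_iff_ne_zero.mpr ?_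
  have hne : (s : R n) ≠ 0 := nonZeroDivisors.ne_zero (SM_le n s.2)
  exact fun h => hne ((map_eq_zero_iff _ (IsFractionRing.injective (R n) (FF n))).mp h)

def jmap (n : ℕ) : A n →+* FF n := IsLocalization.lift (unitsFF n)

lemma jmap_alg (n : ℕ) (r : R n) :
    jmap n (algebraMap (R n) (A n) r) = algebraMap (R n) (FF n) r :=
  IsLocalization.lift_eq _ _

lemma jmap_inj (n : ℕ) : Function.Injective (jmap n) := by
  rw [injective_iff_map_eq_zero]
  intro a ha
  obtain ⟨⟨r, s⟩, rfl⟩ := IsLocalization.mk'_surjective (SM n) a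
  have h := (IsLocalization.lift_mk'_spec (g := algebraMap (R n) (FF n)) (unitsFF n) r 0 s).mp ha
  rw [mul_zero] at h
  have hr : r = 0 := (map_eq_zero_iff _ (IsFractionRing.injective (R n) (FF n))).mp h
  rw [hr]; exact IsLocalization.mk'_zero s

lemma unitsC (n : ℕ) (j : ℕ) : ∀ s : SM n, IsUnit ((e n j).toRingHom s) := fun s =>
  isUnit_iff_ne_zero.mpr (e_S_ne_zero n j s.2)

def eh (n : ℕ) (j : ℕ) : A n →+* ℂ := IsLocalization.lift (unitsC n j)

lemma eh_alg (n : ℕ) (j : ℕ) (r : R n) :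
    eh n j (algebraMap (R n) (A n) r) = e n j r :=
  IsLocalization.lift_eq _ _

lemma eh_mk' (n : ℕ) (j : ℕ) (r : R n) (s : SM n) :
    eh n j (IsLocalization.mk' (A n) r s) = e n j r / e n j (s : R n) := by
  have h := (IsLocalization.lift_mk'_spec (g := (e n j).toRingHom) (unitsC n j) r
    (eh n j (IsLocalization.mk' (A n) r s)) s).mp rfl
  simp only [AlgHom.toRingHom_eq_coe, RingHom.coe_coe] at h
  rw [eq_div_iff (e_S_ne_zero n j s.2), h]; ring

def Phi (n : ℕ) : A n →ₗ[ℚ] ℂ :=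
  ∑ j ∈ Finset.range n, w n ^ (2 * j) • ((eh n j).toRatAlgHom.toLinearMap)

lemma Phi_apply (n : ℕ) (a : A n) :
    Phi n a = ∑ j ∈ Finset.range n, w n ^ (2 * j) * eh n j a := by
  simp [Phi, LinearMap.sum_apply, LinearMap.smul_apply, smul_eq_mul]

lemma jmap_smul (n : ℕ) (c : ℚ) (a : A n) : jmap n (c • a) = c • jmap n a := by
  rw [Algebra.smul_def, map_mul, RingHom.map_rat_algebraMap]
  rw [@Algebra.smul_def ℚ (FF n) _ _ OreLocalization.instAlgebra]
  congr 1
  exact RingHom.congr_fun (Subsingleton.elim _ _) c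

def W (n : ℕ) : Submodule ℚ (FF n) where
  carrier := {f | ∃ a : A n, Phi n a = 0 ∧ jmap n a = f}
  add_mem' := by
    rintro f g ⟨a, ha1, ha2⟩ ⟨b, hb1, hb2⟩
    exact ⟨a + b, by rw [map_add, ha1, hb1, add_zero], by rw [map_add, ha2, hb2]⟩
  zero_mem' := ⟨0, map_zero _, map_zero _⟩
  smul_mem' := by
    rintro c f ⟨a, ha1, ha2⟩
    exact ⟨c • a, by rw [map_smul, ha1, smul_zero], by rw [jmap_smul, ha2]⟩

lemma mem_W (n : ℕ) (f : FF n) :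
    f ∈ W n ↔ ∃ a : A n, Phi n a = 0 ∧ jmap n a = f := Iff.rfl

lemma mem_W_of (n : ℕ) {f : FF n} {r s : R n} (hs : s ∈ SM n)
    (hfs : f * algebraMap (R n) (FF n) s = algebraMap (R n) (FF n) r)
    (h0 : ∑ j ∈ Finset.range n, w n ^ (2 * j) * (e n j r / e n j s) = 0) :
    f ∈ W n := by
  refine (mem_W n f).mpr ⟨IsLocalization.mk' (A n) r ⟨s, hs⟩, ?_, ?_⟩
  · rw [Phi_apply]
    simpa only [eh_mk'] using h0
  · have h := (IsLocalization.lift_mk'_spec (g := algebraMap (R n) (FF n)) (unitsFF n) r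
      (jmap n (IsLocalization.mk' (A n) r ⟨s, hs⟩)) ⟨s, hs⟩).mp rfl
    have hsne : algebraMap (R n) (FF n) s ≠ 0 := by
      have hne : s ≠ 0 := nonZeroDivisors.ne_zero (SM_le n hs)
      exact fun h' => hne ((map_eq_zero_iff _ (IsFractionRing.injective (R n) (FF n))).mp h')
    have : jmap n (IsLocalization.mk' (A n) r ⟨s, hs⟩)
        * algebraMap (R n) (FF n) s = f * algebraMap (R n) (FF n) s := by
      rw [mul_comm, ← h, hfs]
    exact (mul_right_cancel₀ hsne this)


lemma esymm_top_mem (n : ℕ) : esymm (Fin n) ℚ n ∈ SM n := by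
  have hcard : (Finset.univ : Finset (Fin n)).card = n := by simp
  have hps : Finset.powersetCard n (Finset.univ : Finset (Fin n)) = {Finset.univ} := by
    have h2 : Finset.powersetCard n (Finset.univ : Finset (Fin n))
        = Finset.powersetCard (Finset.univ : Finset (Fin n)).card Finset.univ := by rw [hcard]
    rw [h2, Finset.powersetCard_self]
  have htop : esymm (Fin n) ℚ n = ∏ k : Fin n, X k := by
    rw [esymm, hps, Finset.sum_singleton]
  rw [htop]
  exact Submonoid.prod_mem _ fun k _ => Submonoid.subset_closure (Or.inl ⟨k, rfl⟩)

lemma Dpoly_mem (n : ℕ) : Dpoly n ∈ SM n := by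
  refine Submonoid.prod_mem _ fun p hp => ?_
  exact Submonoid.subset_closure
    (Or.inr ⟨p.1, p.2, (Finset.mem_offDiag.mp hp).2.2, rfl⟩)

lemma Dpoly_isSymmetric (n : ℕ) : MvPolynomial.IsSymmetric (Dpoly n) := by
  intro σ
  rw [Dpoly, map_prod]
  simp only [map_sub, rename_X]
  refine Finset.prod_equiv (Equiv.prodCongr σ σ) ?_ ?_
  · intro p
    simp [Finset.mem_offDiag, σ.injective.ne_iff]
  · intro p _; rfl

lemma geom_zero (n : ℕ) (hn : 2 ≤ n) (p : ℕ) (hp : ¬ (n ∣ p + 2)) :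
    ∑ j ∈ Finset.range n, (w n ^ (p + 2)) ^ j = 0 := by
  have hn0 : n ≠ 0 := by omega
  have hx1 : w n ^ (p + 2) ≠ 1 := fun h => hp (((hw n hn0).pow_eq_one_iff_dvd _).mp h)
  rw [geom_sum_eq hx1, ← pow_mul, mul_comm (p+2) n, pow_mul, (hw n hn0).pow_eq_one, one_pow,
    sub_self, zero_div]

lemma genA_mem_W (n : ℕ) (hn : 2 ≤ n) (i : Fin n) {g : R n} (hg : memI n g) {h : FF n}
    (hh : h ∈ QSi n i) : algebraMap (R n) (FF n) g * h ∈ W n := by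
  obtain ⟨m, q, _, hclear⟩ := hh
  set d : R n := X i ^ m * (∏ k ∈ ({i}ᶜ : Finset (Fin n)), (X i - X k)) ^ m with hd
  have hXi : X i ∈ SM n := Submonoid.subset_closure (Or.inl ⟨i, rfl⟩)
  have hprod : (∏ k ∈ ({i}ᶜ : Finset (Fin n)), (X i - X k)) ∈ SM n := by
    refine Submonoid.prod_mem _ fun k hk => ?_
    have hki : i ≠ k := fun h' => by simp [← h'] at hk
    exact Submonoid.subset_closure (Or.inr ⟨i, k, hki, rfl⟩)
  have hdS : d ∈ SM n :=
    Submonoid.mul_mem _ (Submonoid.pow_mem _ hXi m) (Submonoid.pow_mem _ hprod m)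
  refine mem_W_of n (r := g * q) hdS ?_ ?_
  · rw [mul_assoc, hclear, map_mul]
  · refine Finset.sum_eq_zero fun j _ => ?_
    obtain ⟨c, _, rfl⟩ := hg
    have hg0 : e n j (∑ p ∈ Finset.Icc 1 (n - 1), c p * esymm (Fin n) ℚ p) = 0 := by
      rw [map_sum]
      refine Finset.sum_eq_zero fun p hp => ?_
      rw [map_mul, e_esymm n hn j p (Finset.mem_Icc.mp hp).1 (Finset.mem_Icc.mp hp).2,
        mul_zero]
    rw [map_mul, hg0, zero_mul, zero_div, mul_zero]

lemma genB_mem_W (n : ℕ) (hn : 2 ≤ n) (i : Fin n) (p : ℕ)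
    (hp : (p : ℤ) ≤ (n : ℤ) - 3 ∨ p = n - 1) {h : FF n} (hh : h ∈ QS n) :
    algebraMap (R n) (FF n) (X i) ^ p * h ∈ W n := by
  have hn0 : n ≠ 0 := by omega
  obtain ⟨m, q, hq, hclear⟩ := hh
  set d : R n := esymm (Fin n) ℚ n ^ m * Dpoly n ^ m with hd
  have hdS : d ∈ SM n := Submonoid.mul_mem _ (Submonoid.pow_mem _ (esymm_top_mem n) m)
    (Submonoid.pow_mem _ (Dpoly_mem n) m)
  have hdsym : MvPolynomial.IsSymmetric d :=
    ((symmetricSubalgebra (Fin n) ℚ).mul_mem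
      ((symmetricSubalgebra (Fin n) ℚ).pow_mem (esymm_isSymmetric _ _ n) m)
      ((symmetricSubalgebra (Fin n) ℚ).pow_mem (Dpoly_isSymmetric n) m))
  refine mem_W_of n (r := X i ^ p * q) hdS ?_ ?_
  · rw [mul_assoc, hclear, map_mul, map_pow]
  · have hterm : ∀ j, w n ^ (2 * j) * (e n j (X i ^ p * q) / e n j d)
        = (w n ^ (p + 2)) ^ j * ((w n ^ (i : ℕ)) ^ p * (e n 0 q / e n 0 d)) := by
      intro j
      rw [e_symm n hn0 j hdsym, map_mul, map_pow, e_symm n hn0 j hq]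
      have hX : e n j (X i) = w n ^ (j + (i : ℕ)) := by simp [e]
      rw [hX]
      have hexp : 2 * j + (j + (i : ℕ)) * p = (p + 2) * j + (i : ℕ) * p := by ring
      calc w n ^ (2 * j) * ((w n ^ (j + (i : ℕ))) ^ p * e n 0 q / e n 0 d)
          = w n ^ (2 * j + (j + (i : ℕ)) * p) * (e n 0 q / e n 0 d) := by
            rw [← pow_mul, mul_div_assoc, ← mul_assoc, ← pow_add]
        _ = w n ^ ((p + 2) * j + (i : ℕ) * p) * (e n 0 q / e n 0 d) := by rw [hexp]
        _ = (w n ^ (p + 2)) ^ j * ((w n ^ (i : ℕ)) ^ p * (e n 0 q / e n 0 d)) := by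
            rw [pow_add, pow_mul, pow_mul]; ring
    have hdvd : ¬ (n ∣ p + 2) := by
      intro hdvd
      rcases hp with hp | hp
      · have := Nat.le_of_dvd (by omega) hdvd
        omega
      · have h1 : n ∣ p + 2 - n := Nat.dvd_sub hdvd dvd_rfl
        have h2 : p + 2 - n = 1 := by omega
        rw [h2] at h1
        have := Nat.le_of_dvd one_pos h1
        omega
    rw [Finset.sum_congr rfl fun j _ => hterm j, ← Finset.sum_mul, geom_zero n hn p hdvd,
      zero_mul]

lemma Ki_le_W (n : ℕ) (hn : 2 ≤ n) (i : Fin n) : Ki n i ≤ W n := by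
  rw [Ki, Submodule.span_le]
  intro f hf
  simp only [Set.mem_union, Set.mem_setOf_eq] at hf
  rcases hf with ⟨g, h, hg, hh, rfl⟩ | ⟨p, h, hp, hh, rfl⟩
  · exact genA_mem_W n hn i hg hh
  · exact genB_mem_W n hn i p hp hh

end Stmt15Aux

open Stmt15Aux in
/-- Lemma 3.3(ii): for `n ≥ 2`, `α_i^{n-2} ∉ K_i`; equivalently the line spanned
by `α_i^{n-2}` meets `K_i` only in `0`. -/
theorem stmt15 (n : ℕ) (hn : 2 ≤ n) (i : Fin n) :
    algebraMap (MvPolynomial (Fin n) ℚ) (FF n) (X i) ^ (n - 2) ∉ Ki n i ∧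
    Submodule.span ℚ {algebraMap (MvPolynomial (Fin n) ℚ) (FF n) (X i) ^ (n - 2)}
        ⊓ Ki n i = ⊥ := by
  have hnot : algebraMap (MvPolynomial (Fin n) ℚ) (FF n) (X i) ^ (n - 2) ∉ Ki n i := by
    intro hmem
    obtain ⟨m, rfl⟩ : ∃ m, n = m + 2 := ⟨n - 2, by omega⟩
    have hm2 : m + 2 - 2 = m := by omega
    have hfW := Ki_le_W (m + 2) hn i hmem
    obtain ⟨a, ha0, haj⟩ := (mem_W (m + 2) _).mp hfW
    have haeq : a = algebraMap (R (m + 2)) (A (m + 2)) (X i ^ (m + 2 - 2)) := by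
      apply jmap_inj (m + 2)
      rw [haj, jmap_alg, map_pow]
    rw [haeq] at ha0
    have hval : Phi (m + 2) (algebraMap (R (m + 2)) (A (m + 2)) (X i ^ (m + 2 - 2)))
        = (m + 2 : ℕ) * w (m + 2) ^ ((i : ℕ) * m) := by
      rw [Phi_apply]
      simp only [eh_alg]
      have hterm : ∀ j, w (m + 2) ^ (2 * j) * e (m + 2) j (X i ^ (m + 2 - 2))
          = w (m + 2) ^ ((i : ℕ) * m) := by
        intro j
        rw [hm2, map_pow]
        have hX : e (m + 2) j (X i) = w (m + 2) ^ (j + (i : ℕ)) := by simp [e]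
        rw [hX, ← pow_mul, ← pow_add]
        have hexp : 2 * j + (j + (i : ℕ)) * m = (m + 2) * j + (i : ℕ) * m := by ring
        rw [hexp, pow_add, pow_mul, (hw (m + 2) (by omega)).pow_eq_one, one_pow, one_mul]
      rw [Finset.sum_congr rfl fun j _ => hterm j, Finset.sum_const, Finset.card_range,
        nsmul_eq_mul]
    rw [hval] at ha0
    have hcast : ((m + 2 : ℕ) : ℂ) ≠ 0 := Nat.cast_ne_zero.mpr (by omega)
    exact absurd ha0 (mul_ne_zero hcast (pow_ne_zero _ (w_ne_zero (m + 2))))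
  refine ⟨hnot, ?_⟩
  refine (Submodule.eq_bot_iff _).mpr fun x hx => ?_
  obtain ⟨hx1, hx2⟩ := Submodule.mem_inf.mp hx
  obtain ⟨c, rfl⟩ := Submodule.mem_span_singleton.mp hx1
  rcases eq_or_ne c 0 with rfl | hc
  · exact zero_smul ℚ (algebraMap (MvPolynomial (Fin n) ℚ) (FF n) (X i) ^ (n - 2))
  · exfalso
    apply hnot
    have hrw : algebraMap (MvPolynomial (Fin n) ℚ) (FF n) (X i) ^ (n - 2)
        = c⁻¹ • (c • algebraMap (MvPolynomial (Fin n) ℚ) (FF n) (X i) ^ (n - 2)) := by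
      rw [smul_smul, inv_mul_cancel₀ hc, one_smul]
    rw [hrw]
    exact (Ki n i).smul_mem c⁻¹ hx2
end
end
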